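/- arXiv:math/0609627 — 12 statements merged into one kernel-verified Lean document; each statement's English description precedes it below -/
import Mathlib

section
/- Let E be a nonzero finite-dimensional real inner product space and let T : E → E be a symmetric (self-adjoint) positive semidefinite linear map, and let λ_max denote the largest eigenvalue of T. Then the following are equivalent: (i) there exists a twice continuously differentiable u : ℝ → E, not identically zero on [0,1], with u'' + T∘u = 0, u(0) = 0, u(1) = 0, and for every t ∈ (0,1) every twice continuously differentiable solution v of v'' + T∘v = 0 with v(0) = 0 and v(t) = 0 vanishes identically on [0,t]; (ii) λ_max = π². -/
open scoped RealInnerProductSpace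
open Real

/-!
In an orthonormal eigenbasis `b` of `T` the equation `u'' + T u = 0` decouples into scalar
equations `f'' + μ f = 0` with `μ ≥ 0`, so a solution with `u 0 = 0` has coordinates
`⟪b, u t⟫ = sin (√μ t) / √μ * ⟪b, u' 0⟫`. Hence a nonzero such solution can vanish again at
`t > 0` only if `π ≤ √μ t` for some eigenvalue `μ`, while an eigenvector for `λ_max` gives a
solution vanishing at `π / √λ_max` and nowhere in between. So the first zero comes at
`π / √λ_max`, which is `1` exactly when `λ_max = π²`.
-/

/-- The solution of `f'' + μ f = 0`, `f 0 = 0`, `f' 0 = 1` for `μ ≥ 0`. The case `μ = 0` is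
separate because `sin (√μ t) / √μ` would then be `0 / 0 = 0`. -/
noncomputable def jacobiSin (μ t : ℝ) : ℝ :=
  if μ = 0 then t else sin (√μ * t) / √μ

lemma jacobiSin_zero_right (μ : ℝ) : jacobiSin μ 0 = 0 := by simp [jacobiSin]

lemma jacobiSin_zero_left : jacobiSin 0 = id := funext fun _ => if_pos rfl

lemma jacobiSin_of_ne_zero {μ : ℝ} (hμ : μ ≠ 0) : jacobiSin μ = fun t => sin (√μ * t) / √μ :=
  funext fun _ => if_neg hμ

lemma hasDerivAt_jacobiSin {μ : ℝ} (hμ : 0 ≤ μ) (t : ℝ) :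
    HasDerivAt (jacobiSin μ) (cos (√μ * t)) t := by
  rcases hμ.eq_or_lt with rfl | hμ
  · simpa [jacobiSin_zero_left] using hasDerivAt_id t
  · rw [jacobiSin_of_ne_zero hμ.ne']
    refine (((hasDerivAt_id' t).const_mul √μ).sin.div_const √μ).congr_deriv ?_
    field_simp [(sqrt_pos.2 hμ).ne']

lemma hasDerivAt_cos_sqrt_mul {μ : ℝ} (hμ : 0 ≤ μ) (t : ℝ) :
    HasDerivAt (fun s => cos (√μ * s)) (-(μ * jacobiSin μ t)) t := by
  convert ((hasDerivAt_id' t).const_mul √μ).cos using 1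
  rcases hμ.eq_or_lt with rfl | hμ
  · simp
  · rw [jacobiSin_of_ne_zero hμ.ne']
    field_simp
    rw [sq_sqrt hμ.le]

lemma deriv_deriv_jacobiSin {μ : ℝ} (hμ : 0 ≤ μ) (t : ℝ) :
    deriv (deriv (jacobiSin μ)) t = -(μ * jacobiSin μ t) := by
  rw [funext fun s => (hasDerivAt_jacobiSin hμ s).deriv, (hasDerivAt_cos_sqrt_mul hμ t).deriv]

lemma contDiff_jacobiSin {n : WithTop ℕ∞} (μ : ℝ) : ContDiff ℝ n (jacobiSin μ) := by
  by_cases hμ : μ = 0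
  · rw [hμ, jacobiSin_zero_left]
    exact contDiff_id
  · rw [jacobiSin_of_ne_zero hμ]
    exact (contDiff_sin.comp (contDiff_const.mul contDiff_id)).div_const _

lemma jacobiSin_pos {μ t : ℝ} (hμ : 0 ≤ μ) (ht : 0 < t) (htπ : √μ * t < π) :
    0 < jacobiSin μ t := by
  rcases hμ.eq_or_lt with rfl | hμ
  · simpa [jacobiSin_zero_left] using ht
  · rw [jacobiSin_of_ne_zero hμ.ne']
    have hsqrt := sqrt_pos.2 hμ
    exact div_pos (sin_pos_of_pos_of_lt_pi (by positivity) htπ) hsqrt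

lemma jacobiSin_pi_div_sqrt {μ : ℝ} (hμ : 0 < μ) : jacobiSin μ (π / √μ) = 0 := by
  simp only [jacobiSin_of_ne_zero hμ.ne', mul_div_cancel₀ _ (sqrt_pos.2 hμ).ne', sin_pi, zero_div]

/-- Energy argument: `f' ^ 2 + μ f ^ 2` is constant, hence zero, so `f' = 0`. -/
lemma eq_zero_of_hasDerivAt_harmonic {μ : ℝ} (hμ : 0 ≤ μ) {f f' : ℝ → ℝ}
    (hf : ∀ t, HasDerivAt f (f' t) t) (hf' : ∀ t, HasDerivAt f' (-(μ * f t)) t)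
    (h0 : f 0 = 0) (h0' : f' 0 = 0) (t : ℝ) : f t = 0 := by
  have henergy : ∀ t, HasDerivAt (fun s => f' s ^ 2 + μ * f s ^ 2) 0 t := fun t => by
    refine (((hf' t).fun_pow 2).add (((hf t).fun_pow 2).const_mul μ)).congr_deriv ?_
    push_cast
    ring
  have hconst : ∀ t, f' t ^ 2 + μ * f t ^ 2 = 0 := fun t => by
    simpa [h0, h0'] using is_const_of_deriv_eq_zero (fun s => (henergy s).differentiableAt)
      (fun s => (henergy s).deriv) t 0
  have hf'0 : ∀ t, f' t = 0 := fun t => by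
    nlinarith [hconst t, sq_nonneg (f' t), mul_nonneg hμ (sq_nonneg (f t))]
  simpa [h0] using is_const_of_deriv_eq_zero (fun s => (hf s).differentiableAt)
    (fun s => (hf s).deriv.trans (hf'0 s)) t 0

section JacobiEquation

variable {E : Type*} [NormedAddCommGroup E] [InnerProductSpace ℝ E] {T : E →ₗ[ℝ] E}

lemma nonneg_of_hasEigenvalue (hpsd : ∀ x : E, 0 ≤ ⟪T x, x⟫) {μ : ℝ}
    (hμ : Module.End.HasEigenvalue T μ) : 0 ≤ μ :=
  eigenvalue_nonneg_of_nonneg hμ fun x => by simpa [real_inner_comm] using hpsd x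

lemma inner_eq_jacobiSin_mul (hsym : T.IsSymmetric) {μ : ℝ} (hμ : 0 ≤ μ) {b : E}
    (hb : T b = μ • b) {v : ℝ → E} (hv : ContDiff ℝ 2 v)
    (hode : ∀ t, deriv (deriv v) t + T (v t) = 0) (hv0 : v 0 = 0) (t : ℝ) :
    ⟪b, v t⟫ = jacobiSin μ t * ⟪b, deriv v 0⟫ := by
  set c := ⟪b, deriv v 0⟫
  have hinner {w : ℝ → E} {w' : E} {s : ℝ} (hw : HasDerivAt w w' s) :
      HasDerivAt (fun s => ⟪b, w s⟫) ⟪b, w'⟫ s := by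
    simpa using (hasDerivAt_const s b).inner ℝ hw
  have hv' (s : ℝ) : HasDerivAt v (deriv v s) s :=
    (hv.differentiable (by norm_num) s).hasDerivAt
  have hv'' (s : ℝ) : HasDerivAt (deriv v) (-T (v s)) s := by
    rw [← eq_neg_of_add_eq_zero_left (hode s)]
    exact (hv.differentiable_deriv_two s).hasDerivAt
  have hTcoord (s : ℝ) : ⟪b, -T (v s)⟫ = -(μ * ⟪b, v s⟫) := by
    rw [inner_neg_right, ← hsym, hb, real_inner_smul_left]
  have hdiff := eq_zero_of_hasDerivAt_harmonic hμ
    (f := fun s => ⟪b, v s⟫ - c * jacobiSin μ s)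
    (f' := fun s => ⟪b, deriv v s⟫ - c * cos (√μ * s))
    (fun s => (hinner (hv' s)).sub ((hasDerivAt_jacobiSin hμ s).const_mul c))
    (fun s => ((hinner (hv'' s)).sub ((hasDerivAt_cos_sqrt_mul hμ s).const_mul c)).congr_deriv
      (by rw [hTcoord]; ring))
    (by simp [hv0, jacobiSin_zero_right]) (by simp [c]) t
  linarith [hdiff]

lemma deriv_deriv_jacobiSin_smul_add {μ : ℝ} (hμ : 0 ≤ μ) {e : E} (he : T e = μ • e) (t : ℝ) :
    deriv (deriv fun s => jacobiSin μ s • e) t + T (jacobiSin μ t • e) = 0 := by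
  have hd (s : ℝ) : deriv (fun s => jacobiSin μ s • e) s = deriv (jacobiSin μ) s • e :=
    deriv_smul_const (hasDerivAt_jacobiSin hμ s).differentiableAt e
  rw [funext hd, deriv_smul_const ((contDiff_jacobiSin μ).differentiable_deriv_two t) e,
    deriv_deriv_jacobiSin hμ t, map_smul, he, smul_smul, ← add_smul]
  simp [mul_comm]

lemma exists_hasEigenvalue_pi_le_sqrt_mul [FiniteDimensional ℝ E] (hsym : T.IsSymmetric)
    (hpsd : ∀ x : E, 0 ≤ ⟪T x, x⟫) {v : ℝ → E} (hv : ContDiff ℝ 2 v)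
    (hode : ∀ t, deriv (deriv v) t + T (v t) = 0) (hv0 : v 0 = 0) {t s : ℝ} (ht : 0 < t)
    (hvt : v t = 0) (hvs : v s ≠ 0) : ∃ μ, Module.End.HasEigenvalue T μ ∧ π ≤ √μ * t := by
  by_contra! hlt
  set b := hsym.eigenvectorBasis rfl
  set μ := hsym.eigenvalues rfl
  have hμ (i) : 0 ≤ μ i := nonneg_of_hasEigenvalue hpsd (hsym.hasEigenvalue_eigenvalues rfl i)
  have hcoord (i) (r : ℝ) : ⟪b i, v r⟫ = jacobiSin (μ i) r * ⟪b i, deriv v 0⟫ :=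
    inner_eq_jacobiSin_mul hsym (hμ i) (hsym.hasEigenvector_eigenvectorBasis rfl i).apply_eq_smul
      hv hode hv0 r
  have hinit (i) : ⟪b i, deriv v 0⟫ = 0 := by
    have hpos := jacobiSin_pos (hμ i) ht (hlt _ (hsym.hasEigenvalue_eigenvalues rfl i))
    have := hcoord i t
    rw [hvt, inner_zero_right] at this
    exact (mul_eq_zero.1 this.symm).resolve_left hpos.ne'
  apply hvs
  rw [← b.sum_repr' (v s)]
  exact Finset.sum_eq_zero fun i _ => by rw [hcoord, hinit, mul_zero, zero_smul]

end JacobiEquation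

theorem stmt1_general {E : Type*} [NormedAddCommGroup E] [InnerProductSpace ℝ E]
    [FiniteDimensional ℝ E]
    (T : E →ₗ[ℝ] E) (hsym : T.IsSymmetric) (hpsd : ∀ x : E, 0 ≤ ⟪T x, x⟫)
    (lmax : ℝ) (hlmax : IsGreatest {μ : ℝ | Module.End.HasEigenvalue T μ} lmax) :
    (∃ u : ℝ → E, ContDiff ℝ 2 u ∧ ¬ (∀ t ∈ Set.Icc (0:ℝ) 1, u t = 0) ∧
        (∀ t : ℝ, deriv (deriv u) t + T (u t) = 0) ∧ u 0 = 0 ∧ u 1 = 0 ∧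
        (∀ t ∈ Set.Ioo (0:ℝ) 1, ∀ v : ℝ → E, ContDiff ℝ 2 v →
          (∀ s : ℝ, deriv (deriv v) s + T (v s) = 0) → v 0 = 0 → v t = 0 →
          ∀ s ∈ Set.Icc (0:ℝ) t, v s = 0)) ↔
      lmax = Real.pi ^ 2 := by
  have hl0 : 0 ≤ lmax := nonneg_of_hasEigenvalue hpsd hlmax.1
  obtain ⟨e, he⟩ := hlmax.1.exists_hasEigenvector
  have hwC : ContDiff ℝ 2 fun s => jacobiSin lmax s • e :=
    (contDiff_jacobiSin lmax).smul contDiff_const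
  have hwode := deriv_deriv_jacobiSin_smul_add hl0 he.apply_eq_smul
  have hw_ne {s : ℝ} (hs : 0 < s) (hsπ : √lmax * s < π) : jacobiSin lmax s • e ≠ 0 :=
    smul_ne_zero (jacobiSin_pos hl0 hs hsπ).ne' he.2
  constructor
  · rintro ⟨u, hu, hune, hode, hu0, hu1, hmin⟩
    push Not at hune
    obtain ⟨s, -, hus⟩ := hune
    obtain ⟨μ, hμ, hπμ⟩ := exists_hasEigenvalue_pi_le_sqrt_mul hsym hpsd hu hode hu0 one_pos hu1 hus
    have hπl : π ≤ √lmax := (mul_one √μ ▸ hπμ).trans (sqrt_le_sqrt (hlmax.2 hμ))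
    suffices √lmax ≤ π by rw [← sq_sqrt hl0, le_antisymm this hπl]
    by_contra! hlπ
    have hl : 0 < √lmax := pi_pos.trans hlπ
    set t₀ := π / √lmax
    have ht₀ : t₀ ∈ Set.Ioo (0:ℝ) 1 := ⟨by positivity, (div_lt_one hl).2 hlπ⟩
    have hwt₀ : jacobiSin lmax t₀ • e = 0 := by
      rw [jacobiSin_pi_div_sqrt (sqrt_pos.1 hl), zero_smul]
    have hw_half := hmin t₀ ht₀ _ hwC hwode (by simp [jacobiSin_zero_right]) hwt₀ (t₀ / 2)
      ⟨by linarith [ht₀.1], by linarith [ht₀.1]⟩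
    refine hw_ne (by linarith [ht₀.1]) ?_ hw_half
    rw [mul_div_assoc', mul_div_cancel₀ _ hl.ne']
    linarith [pi_pos]
  · intro hl
    have hsqrt : √lmax = π := by rw [hl, sqrt_sq pi_pos.le]
    refine ⟨_, hwC, ?_, hwode, by simp [jacobiSin_zero_right], ?_, ?_⟩
    · exact fun h => hw_ne one_half_pos (by rw [hsqrt]; linarith [pi_pos])
        (h _ ⟨by norm_num, by norm_num⟩)
    · have h1 : (1:ℝ) = π / √lmax := by rw [hsqrt, div_self pi_ne_zero]
      rw [h1, jacobiSin_pi_div_sqrt (by rw [hl]; positivity), zero_smul]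
    · intro t ht v hv hode hv0 hvt s _
      by_contra hvs
      obtain ⟨μ, hμ, hπμ⟩ := exists_hasEigenvalue_pi_le_sqrt_mul hsym hpsd hv hode hv0 ht.1 hvt hvs
      have hμl := mul_le_mul_of_nonneg_right (sqrt_le_sqrt (hlmax.2 hμ)) ht.1.le
      rw [hsqrt] at hμl
      linarith [mul_lt_of_lt_one_right pi_pos ht.2]

/-- The ODE content of Proposition 1.2: for a symmetric positive semidefinite
endomorphism `T` with largest eigenvalue `lmax`, there is a nonzero solution of
`u'' + T u = 0` vanishing at `0` and `1` such that no nonzero solution vanishes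
at `0` and at an interior point `t ∈ (0,1)`, if and only if `lmax = π²`. -/
theorem stmt1 {E : Type*} [NormedAddCommGroup E] [InnerProductSpace ℝ E]
    [FiniteDimensional ℝ E] [Nontrivial E]
    (T : E →ₗ[ℝ] E) (hsym : T.IsSymmetric) (hpsd : ∀ x : E, 0 ≤ ⟪T x, x⟫)
    (lmax : ℝ) (hlmax : IsGreatest {μ : ℝ | Module.End.HasEigenvalue T μ} lmax) :
    (∃ u : ℝ → E, ContDiff ℝ 2 u ∧ ¬ (∀ t ∈ Set.Icc (0:ℝ) 1, u t = 0) ∧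
        (∀ t : ℝ, deriv (deriv u) t + T (u t) = 0) ∧ u 0 = 0 ∧ u 1 = 0 ∧
        (∀ t ∈ Set.Ioo (0:ℝ) 1, ∀ v : ℝ → E, ContDiff ℝ 2 v →
          (∀ s : ℝ, deriv (deriv v) s + T (v s) = 0) → v 0 = 0 → v t = 0 →
          ∀ s ∈ Set.Icc (0:ℝ) t, v s = 0)) ↔
      lmax = Real.pi ^ 2 :=
  stmt1_general T hsym hpsd lmax hlmax
end

section
/- Let l ≥ 1, work in EuclideanSpace ℝ (Fin (l+1)) with standard orthonormal basis x₁, …, x_{l+1}, and set α_j = x_j − x_{j+1} for 1 ≤ j ≤ l. For each j let e_j be the unique vector in the span of {α₁,…,α_l} with ⟨e_j, α_i⟩ = δ_{ij} for all i. Then e_j = (1/(l+1)) ( (l+1−j) Σ_{k=1}^{j} x_k − j Σ_{k=j+1}^{l+1} x_k ), and max_{1≤j≤l} ‖e_j‖² equals (l+1)/4 if l is odd, and l(l+2)/(4(l+1)) if l is even. -/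
open scoped RealInnerProductSpace
open Finset

lemma stmt5_card_le (n j : ℕ) (h : j < n) :
    (Finset.univ.filter (fun k : Fin n => (k:ℕ) ≤ j)).card = j + 1 := by
  have : (Finset.univ.filter (fun k : Fin n => (k:ℕ) ≤ j)) =
      (Finset.univ : Finset (Fin (j+1))).map (Fin.castLEEmb h) := by
    ext k
    simp only [mem_filter, mem_univ, true_and, mem_map]
    constructor
    · intro hk; exact ⟨⟨k, by omega⟩, by ext; simp [Fin.castLEEmb]⟩
    · rintro ⟨a, rfl⟩; simpa [Fin.castLEEmb] using by omega
  simp [this]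

lemma stmt5_inner_sum_single {n : ℕ} (A : Finset (Fin n)) (a : Fin n) :
    ⟪∑ k ∈ A, EuclideanSpace.single k (1:ℝ), EuclideanSpace.single a (1:ℝ)⟫
      = if a ∈ A then 1 else 0 := by
  rw [sum_inner]
  simp only [EuclideanSpace.inner_single_left, EuclideanSpace.single_apply, map_one, one_mul]
  simp [Finset.sum_ite_eq, eq_comm]

lemma stmt5_diff_mem (l : ℕ) (a b : Fin (l+1)) :
    (EuclideanSpace.single a (1:ℝ)) - EuclideanSpace.single b 1 ∈
      Submodule.span ℝ (Set.range (fun j : Fin l =>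
        (EuclideanSpace.single j.castSucc (1:ℝ)) - EuclideanSpace.single j.succ 1)) := by
  set S := Submodule.span ℝ (Set.range (fun j : Fin l =>
        (EuclideanSpace.single j.castSucc (1:ℝ)) - EuclideanSpace.single j.succ 1)) with hS
  have key : ∀ m (hm : m ≤ l),
      (EuclideanSpace.single (0 : Fin (l+1)) (1:ℝ)) - EuclideanSpace.single ⟨m, by omega⟩ 1 ∈ S := by
    intro m
    induction m with
    | zero => intro _; simp
    | succ m ih =>
      intro hm
      have h1 : (EuclideanSpace.single (0 : Fin (l+1)) (1:ℝ)) - EuclideanSpace.single ⟨m+1, by omega⟩ 1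
          = ((EuclideanSpace.single (0 : Fin (l+1)) (1:ℝ)) - EuclideanSpace.single ⟨m, by omega⟩ 1)
            + ((EuclideanSpace.single (⟨m, by omega⟩ : Fin l).castSucc (1:ℝ))
               - EuclideanSpace.single (⟨m, by omega⟩ : Fin l).succ 1) := by
        have e1 : ((⟨m, by omega⟩ : Fin l).castSucc : Fin (l+1)) = ⟨m, by omega⟩ := rfl
        have e2 : ((⟨m, by omega⟩ : Fin l).succ : Fin (l+1)) = ⟨m+1, by omega⟩ := rfl
        rw [e1, e2]; abel
      rw [h1]
      exact S.add_mem (ih (by omega)) (Submodule.subset_span ⟨⟨m, by omega⟩, rfl⟩)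
  have ha := key a.val (by omega)
  have hb := key b.val (by omega)
  have : (EuclideanSpace.single a (1:ℝ)) - EuclideanSpace.single b 1
      = ((EuclideanSpace.single (0 : Fin (l+1)) (1:ℝ)) - EuclideanSpace.single ⟨b.val, by omega⟩ 1)
        - ((EuclideanSpace.single (0 : Fin (l+1)) (1:ℝ)) - EuclideanSpace.single ⟨a.val, by omega⟩ 1) := by
    simp only [Fin.eta]; abel
  rw [this]
  exact S.sub_mem hb ha

section FFacts
variable (l : ℕ) (j : Fin l)

lemma stmt5_cardA : (Finset.univ.filter (fun k : Fin (l+1) => (k:ℕ) ≤ (j:ℕ))).card = (j:ℕ) + 1 :=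
  stmt5_card_le (l+1) j (by omega)

lemma stmt5_cardB : (Finset.univ.filter (fun k : Fin (l+1) => (j:ℕ) < (k:ℕ))).card = l - (j:ℕ) := by
  have h := Finset.card_filter_add_card_filter_not (s := (Finset.univ : Finset (Fin (l+1))))
    (p := fun k : Fin (l+1) => (k:ℕ) ≤ (j:ℕ))
  have h2 : (Finset.univ.filter (fun k : Fin (l+1) => ¬ (k:ℕ) ≤ (j:ℕ)))
      = (Finset.univ.filter (fun k : Fin (l+1) => (j:ℕ) < (k:ℕ))) := by
    apply Finset.filter_congr; intro k _; simp [not_le]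
  rw [stmt5_cardA, h2] at h
  simp only [Finset.card_univ, Fintype.card_fin] at h
  have := j.isLt
  omega

end FFacts

noncomputable def stmt5_SA (l : ℕ) (j : Fin l) : EuclideanSpace ℝ (Fin (l+1)) :=
  ∑ k ∈ Finset.univ.filter (fun k : Fin (l+1) => (k:ℕ) ≤ (j:ℕ)), EuclideanSpace.single k 1

noncomputable def stmt5_SB (l : ℕ) (j : Fin l) : EuclideanSpace ℝ (Fin (l+1)) :=
  ∑ k ∈ Finset.univ.filter (fun k : Fin (l+1) => (j:ℕ) < (k:ℕ)), EuclideanSpace.single k 1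

noncomputable def stmt5_F (l : ℕ) (j : Fin l) : EuclideanSpace ℝ (Fin (l+1)) :=
  ((l:ℝ)+1)⁻¹ • (((l:ℝ) - ((j:ℕ):ℝ)) • stmt5_SA l j - (((j:ℕ):ℝ)+1) • stmt5_SB l j)

lemma stmt5_F_inner_alpha (l : ℕ) (j i : Fin l) :
    ⟪stmt5_F l j, (EuclideanSpace.single i.castSucc (1:ℝ)) - EuclideanSpace.single i.succ 1⟫
      = if i = j then 1 else 0 := by
  have hl1 : ((l:ℝ)+1) ≠ 0 := by positivity
  simp only [stmt5_F, stmt5_SA, stmt5_SB, inner_sub_right, inner_sub_left, real_inner_smul_left,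
    stmt5_inner_sum_single, Finset.mem_filter, Finset.mem_univ, true_and,
    Fin.coe_castSucc, Fin.val_succ]
  rcases lt_trichotomy (i:ℕ) (j:ℕ) with h|h|h
  · have : ¬ (i = j) := by simp [Fin.ext_iff]; omega
    rw [if_pos (by omega : (i:ℕ) ≤ (j:ℕ)), if_neg (by omega : ¬ (j:ℕ) < (i:ℕ)),
      if_pos (by omega : (i:ℕ) + 1 ≤ (j:ℕ)), if_neg (by omega : ¬ (j:ℕ) < (i:ℕ) + 1), if_neg this]
    ring
  · have : i = j := Fin.ext h
    rw [if_pos (by omega : (i:ℕ) ≤ (j:ℕ)), if_neg (by omega : ¬ (j:ℕ) < (i:ℕ)),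
      if_neg (by omega : ¬ (i:ℕ) + 1 ≤ (j:ℕ)), if_pos (by omega : (j:ℕ) < (i:ℕ) + 1), if_pos this]
    field_simp
    ring
  · have : ¬ (i = j) := by simp [Fin.ext_iff]; omega
    rw [if_neg (by omega : ¬ (i:ℕ) ≤ (j:ℕ)), if_pos (by omega : (j:ℕ) < (i:ℕ)),
      if_neg (by omega : ¬ (i:ℕ) + 1 ≤ (j:ℕ)), if_pos (by omega : (j:ℕ) < (i:ℕ) + 1), if_neg this]
    ring

lemma stmt5_inner_sums {n : ℕ} (A B : Finset (Fin n)) :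
    ⟪(∑ k ∈ A, EuclideanSpace.single k (1:ℝ)), ∑ m ∈ B, EuclideanSpace.single m (1:ℝ)⟫
      = ((B ∩ A).card : ℝ) := by
  rw [inner_sum]
  simp only [stmt5_inner_sum_single]
  rw [Finset.sum_ite_mem, Finset.sum_const, nsmul_eq_mul, mul_one]

lemma stmt5_AB_disj (l : ℕ) (j : Fin l) :
    ((Finset.univ.filter (fun k : Fin (l+1) => (j:ℕ) < (k:ℕ))) ∩
      (Finset.univ.filter (fun k : Fin (l+1) => (k:ℕ) ≤ (j:ℕ)))) = ∅ := by
  ext k; simp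

lemma stmt5_F_inner_self (l : ℕ) (j : Fin l) :
    ⟪stmt5_F l j, stmt5_F l j⟫ = (((j:ℕ):ℝ)+1) * ((l:ℝ)-((j:ℕ):ℝ)) / ((l:ℝ)+1) := by
  have hl1 : ((l:ℝ)+1) ≠ 0 := by positivity
  have hAA := stmt5_inner_sums (n := l+1)
    (Finset.univ.filter (fun k : Fin (l+1) => (k:ℕ) ≤ (j:ℕ)))
    (Finset.univ.filter (fun k : Fin (l+1) => (k:ℕ) ≤ (j:ℕ)))
  have hBB := stmt5_inner_sums (n := l+1)
    (Finset.univ.filter (fun k : Fin (l+1) => (j:ℕ) < (k:ℕ)))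
    (Finset.univ.filter (fun k : Fin (l+1) => (j:ℕ) < (k:ℕ)))
  have hAB := stmt5_inner_sums (n := l+1)
    (Finset.univ.filter (fun k : Fin (l+1) => (k:ℕ) ≤ (j:ℕ)))
    (Finset.univ.filter (fun k : Fin (l+1) => (j:ℕ) < (k:ℕ)))
  have hBA := stmt5_inner_sums (n := l+1)
    (Finset.univ.filter (fun k : Fin (l+1) => (j:ℕ) < (k:ℕ)))
    (Finset.univ.filter (fun k : Fin (l+1) => (k:ℕ) ≤ (j:ℕ)))
  rw [Finset.inter_self, stmt5_cardA] at hAA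
  rw [Finset.inter_self, stmt5_cardB] at hBB
  rw [stmt5_AB_disj] at hAB
  rw [Finset.inter_comm, stmt5_AB_disj] at hBA
  have hjl : (j:ℕ) < l := j.isLt
  have hcast : ((l - (j:ℕ) : ℕ) : ℝ) = (l:ℝ) - ((j:ℕ):ℝ) := by
    push_cast [Nat.cast_sub (le_of_lt hjl)]; ring
  simp only [stmt5_F, stmt5_SA, stmt5_SB, real_inner_smul_left, real_inner_smul_right,
    inner_sub_left, inner_sub_right, hAA, hBB, hAB, hBA, hcast, Finset.card_empty,
    Nat.cast_zero, Nat.cast_add, Nat.cast_one]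
  field_simp
  ring

lemma stmt5_F_mem (l : ℕ) (j : Fin l) :
    stmt5_F l j ∈ Submodule.span ℝ (Set.range (fun i : Fin l =>
      (EuclideanSpace.single i.castSucc (1:ℝ)) - EuclideanSpace.single i.succ 1)) := by
  set S := Submodule.span ℝ (Set.range (fun i : Fin l =>
      (EuclideanSpace.single i.castSucc (1:ℝ)) - EuclideanSpace.single i.succ 1))
  set A := Finset.univ.filter (fun k : Fin (l+1) => (k:ℕ) ≤ (j:ℕ)) with hA
  set B := Finset.univ.filter (fun k : Fin (l+1) => (j:ℕ) < (k:ℕ)) with hB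
  have hjl : (j:ℕ) < l := j.isLt
  have hcardA : (A.card : ℝ) = ((j:ℕ):ℝ) + 1 := by rw [hA, stmt5_cardA]; push_cast; ring
  have hcardB : (B.card : ℝ) = (l:ℝ) - ((j:ℕ):ℝ) := by
    rw [hB, stmt5_cardB, Nat.cast_sub (le_of_lt hjl)]
  have key : stmt5_F l j = ((l:ℝ)+1)⁻¹ •
      ∑ k ∈ A, ∑ m ∈ B, ((EuclideanSpace.single k (1:ℝ)) - EuclideanSpace.single m 1) := by
    have h1 : ∑ k ∈ A, ∑ m ∈ B, ((EuclideanSpace.single k (1:ℝ)) - EuclideanSpace.single m 1)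
        = (B.card : ℝ) • stmt5_SA l j - (A.card : ℝ) • stmt5_SB l j := by
      have h2 : ∀ k : Fin (l+1),
          ∑ m ∈ B, ((EuclideanSpace.single k (1:ℝ)) - EuclideanSpace.single m 1)
            = (B.card : ℝ) • EuclideanSpace.single k 1 - stmt5_SB l j := by
        intro k
        rw [Finset.sum_sub_distrib, Finset.sum_const, stmt5_SB, ← hB,
          Nat.cast_smul_eq_nsmul]
      rw [Finset.sum_congr rfl (fun k _ => h2 k), Finset.sum_sub_distrib, Finset.sum_const,
        ← Finset.smul_sum, stmt5_SA, ← hA, Nat.cast_smul_eq_nsmul, Nat.cast_smul_eq_nsmul]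
    rw [h1, hcardA, hcardB, stmt5_F]
  rw [key]
  exact S.smul_mem _ (Submodule.sum_mem _ (fun k _ => Submodule.sum_mem _
    (fun m _ => stmt5_diff_mem l k m)))

lemma stmt5_unique {E : Type*} [NormedAddCommGroup E] [InnerProductSpace ℝ E] {ι : Type*}
    (f : ι → E) {v w : E}
    (lv : v ∈ Submodule.span ℝ (Set.range f)) (lw : w ∈ Submodule.span ℝ (Set.range f))
    (h : ∀ i, ⟪v, f i⟫ = ⟪w, f i⟫) : v = w := by
  have hd : v - w ∈ Submodule.span ℝ (Set.range f) := Submodule.sub_mem _ lv lw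
  have key : ∀ u ∈ Submodule.span ℝ (Set.range f), ⟪v - w, u⟫ = 0 := by
    intro u hu
    induction hu using Submodule.span_induction with
    | mem u hu => rcases hu with ⟨i, rfl⟩; rw [inner_sub_left, h, sub_self]
    | zero => simp
    | add a b _ _ ha hb => rw [inner_add_right, ha, hb, add_zero]
    | smul r a _ ha => rw [real_inner_smul_right, ha, mul_zero]
  have h0 := key _ hd
  rw [← sub_eq_zero]
  exact inner_self_eq_zero.mp h0

lemma stmt5_max (l : ℕ) (hl : 0 < l) (hne : (Finset.univ : Finset (Fin l)).Nonempty) :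
    Finset.univ.sup' hne
        (fun j : Fin l => (((j:ℕ):ℝ)+1) * ((l:ℝ)-((j:ℕ):ℝ)) / ((l:ℝ)+1)) =
      if Odd l then ((l : ℝ) + 1) / 4
      else ((l : ℝ) * ((l : ℝ) + 2)) / (4 * ((l : ℝ) + 1)) := by
  have hl1 : (0:ℝ) < (l:ℝ) + 1 := by positivity
  set j0 : Fin l := ⟨(l-1)/2, by omega⟩ with hj0
  by_cases hodd : Odd l
  · rw [if_pos hodd]
    obtain ⟨m, hm⟩ := hodd
    apply le_antisymm
    · apply Finset.sup'_le
      intro j _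
      rw [div_le_div_iff₀ hl1 (by norm_num)]
      have hjl : ((j:ℕ):ℝ) ≤ (l:ℝ) - 1 := by
        have := j.isLt; push_cast; have : ((j:ℕ):ℝ) + 1 ≤ (l:ℝ) := by exact_mod_cast this
        linarith
      nlinarith [sq_nonneg ((l:ℝ) - 2*((j:ℕ):ℝ) - 1)]
    · refine le_trans (le_of_eq ?_) (Finset.le_sup' _ (Finset.mem_univ j0))
      have hv : ((j0:ℕ):ℝ) = (m:ℝ) := by
        have h1 : (j0:ℕ) = m := by simp [hj0]; omega
        exact_mod_cast h1
      have hlm : (l:ℝ) = 2*(m:ℝ) + 1 := by exact_mod_cast hm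
      rw [hv, hlm]
      field_simp
      ring
  · rw [if_neg hodd]
    obtain ⟨m, hm⟩ := Nat.not_odd_iff_even.mp hodd
    have hm1 : 1 ≤ m := by omega
    apply le_antisymm
    · apply Finset.sup'_le
      intro j _
      rw [div_le_div_iff₀ hl1 (by positivity)]
      have hint : (1:ℤ) ≤ ((l:ℤ) - 2*((j:ℕ):ℤ) - 1)^2 := by
        have hne0 : ((l:ℤ) - 2*((j:ℕ):ℤ) - 1) ≤ -1 ∨ 1 ≤ ((l:ℤ) - 2*((j:ℕ):ℤ) - 1) := by
          omega
        rcases hne0 with h | h <;> nlinarith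
      have hreal : (1:ℝ) ≤ ((l:ℝ) - 2*((j:ℕ):ℝ) - 1)^2 := by exact_mod_cast hint
      nlinarith [hreal]
    · refine le_trans (le_of_eq ?_) (Finset.le_sup' _ (Finset.mem_univ j0))
      have hv : ((j0:ℕ):ℝ) = (m:ℝ) - 1 := by
        have h1 : (j0:ℕ) = m - 1 := by simp [hj0]; omega
        rw [h1]; push_cast [Nat.cast_sub hm1]; ring
      have hlm : (l:ℝ) = 2*(m:ℝ) := by rw [hm]; push_cast; ring
      have hm0 : (0:ℝ) < (m:ℝ) := by exact_mod_cast hm1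
      rw [hv, hlm]
      field_simp
      ring

/-- (2.7)–(2.8): the vertices `e_j` of the Cartan polyhedron facet for the root
system `a_l` (simple roots `α_j = x_j − x_{j+1}`, all `d_j = 1`) and the value of
`max_j ‖e_j‖²`. Indices are zero-based: `j : Fin l` corresponds to `j+1` in the
one-based statement. -/
theorem stmt5 (l : ℕ) (hl : 0 < l)
    (x : Fin (l + 1) → EuclideanSpace ℝ (Fin (l + 1)))
    (hx : ∀ i, x i = EuclideanSpace.single i (1 : ℝ))
    (α : Fin l → EuclideanSpace ℝ (Fin (l + 1)))
    (hα : ∀ j : Fin l, α j = x j.castSucc - x j.succ)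
    (e : Fin l → EuclideanSpace ℝ (Fin (l + 1)))
    (hspan : ∀ j, e j ∈ Submodule.span ℝ (Set.range α))
    (he : ∀ i j, ⟪e j, α i⟫ = if i = j then (1 : ℝ) else 0) :
    (∀ j : Fin l, e j = ((l : ℝ) + 1)⁻¹ •
        (((l : ℝ) - (j : ℕ)) •
            (∑ k ∈ Finset.univ.filter (fun k : Fin (l + 1) => (k : ℕ) ≤ (j : ℕ)), x k) -
          (((j : ℕ) : ℝ) + 1) •
            (∑ k ∈ Finset.univ.filter (fun k : Fin (l + 1) => (j : ℕ) < (k : ℕ)), x k))) ∧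
    Finset.univ.sup' (Finset.univ_nonempty_iff.mpr ⟨⟨0, hl⟩⟩)
        (fun j : Fin l => ‖e j‖ ^ 2) =
      if Odd l then ((l : ℝ) + 1) / 4
      else ((l : ℝ) * ((l : ℝ) + 2)) / (4 * ((l : ℝ) + 1)) := by
  have hα' : α = fun i : Fin l =>
      (EuclideanSpace.single i.castSucc (1:ℝ)) - EuclideanSpace.single i.succ 1 := by
    funext i; rw [hα, hx, hx]
  rw [hα'] at hspan he
  have hFe : ∀ j, e j = stmt5_F l j := by
    intro j
    refine stmt5_unique _ (hspan j) (stmt5_F_mem l j) (fun i => ?_)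
    rw [he i j, stmt5_F_inner_alpha]
  constructor
  · intro j
    rw [hFe j]
    simp only [stmt5_F, stmt5_SA, stmt5_SB, hx]
  · have hval : ∀ j : Fin l,
        ‖e j‖ ^ 2 = (((j:ℕ):ℝ)+1) * ((l:ℝ)-((j:ℕ):ℝ)) / ((l:ℝ)+1) := by
      intro j
      rw [hFe j, ← real_inner_self_eq_norm_sq, stmt5_F_inner_self]
    rw [Finset.sup'_congr _ rfl (fun j _ => hval j)]
    exact stmt5_max l hl _
end

section
/- Let l ≥ 2, work in EuclideanSpace ℝ (Fin l) with standard orthonormal basis x₁, …, x_l, set α_i = x_i − x_{i+1} for 1 ≤ i ≤ l−1 and α_l = x_l, and set d₁ = 1 and d_i = 2 for 2 ≤ i ≤ l. For each j let e_j be the unique vector with ⟨e_j, α_i⟩ = δ_{ij}/d_j for all i. Then e₁ = x₁ and e_j = (1/2) Σ_{k=1}^{j} x_k for 2 ≤ j ≤ l, and max_{1≤j≤l} ‖e_j‖² equals 1 if l ≤ 3, and l/4 if l ≥ 4. -/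
open scoped RealInnerProductSpace
open Finset

/-!
The simple roots telescope: `x_i = ∑_{k ≥ i} α_k`, so every coordinate of a vector is
`v_i = ∑_{k ≥ i} ⟪v, α_k⟫`. For `e_j` only the term `k = j` survives, hence `e_j` has the
entry `1 / d_j` in the coordinates `i ≤ j` and `0` elsewhere, and `‖e_j‖² = (j + 1) / d_j²`.
The maximum is `‖e_1‖² = 1` or `‖e_l‖² = l / 4`, whichever is larger.
-/

noncomputable def simpleRootB (l : ℕ) (i : Fin l) : EuclideanSpace ℝ (Fin l) :=
  if h : (i : ℕ) + 1 < l then EuclideanSpace.single i 1 - EuclideanSpace.single ⟨i + 1, h⟩ 1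
  else EuclideanSpace.single i 1

theorem Fin.Ici_castSucc_eq_insert {n : ℕ} (i : Fin n) :
    Ici i.castSucc = insert i.castSucc (Ici i.succ) := by
  ext k
  simp [Fin.le_def, Fin.ext_iff]
  omega

theorem sum_Ici_simpleRootB {l : ℕ} (i : Fin l) :
    ∑ k ∈ Ici i, simpleRootB l k = EuclideanSpace.single i 1 := by
  obtain ⟨n, rfl⟩ : ∃ n, l = n + 1 := Nat.exists_eq_add_one.mpr i.pos
  induction i using Fin.reverseInduction with
  | last => simp [← Fin.top_eq_last, Ici_top, simpleRootB]
  | cast i ih =>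
    rw [Fin.Ici_castSucc_eq_insert, sum_insert (by simp [Fin.le_def]), ih]
    simp [simpleRootB, Fin.succ]

theorem apply_eq_sum_inner_simpleRootB {l : ℕ} (v : EuclideanSpace ℝ (Fin l)) (i : Fin l) :
    v i = ∑ k ∈ Ici i, ⟪v, simpleRootB l k⟫ := by
  rw [← inner_sum, sum_Ici_simpleRootB, EuclideanSpace.inner_single_right]
  simp

theorem apply_eq_of_inner_simpleRootB {l : ℕ} {v : EuclideanSpace ℝ (Fin l)} {j : Fin l} {c : ℝ}
    (hv : ∀ i, ⟪v, simpleRootB l i⟫ = if i = j then c else 0) (i : Fin l) :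
    v i = if i ≤ j then c else 0 := by
  simp [apply_eq_sum_inner_simpleRootB, hv]

theorem eq_smul_sum_single_of_apply {l : ℕ} {v : EuclideanSpace ℝ (Fin l)} {j : Fin l} {c : ℝ}
    (hv : ∀ i, v i = if i ≤ j then c else 0) :
    v = c • ∑ k ∈ Iic j, EuclideanSpace.single k (1 : ℝ) := by
  ext i
  simp [hv]

theorem norm_sq_of_apply {l : ℕ} {v : EuclideanSpace ℝ (Fin l)} {j : Fin l} {c : ℝ}
    (hv : ∀ i, v i = if i ≤ j then c else 0) :
    ‖v‖ ^ 2 = ((j : ℕ) + 1) * c ^ 2 := by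
  simp [EuclideanSpace.norm_sq_eq, hv, apply_ite, sum_ite, filter_ge_eq_Iic]

theorem sup'_succ_mul_sq {l : ℕ} (H : (univ : Finset (Fin l)).Nonempty) :
    univ.sup' H (fun j : Fin l => ((j : ℕ) + 1) * (if (j : ℕ) = 0 then 1 else 1 / 2 : ℝ) ^ 2) =
      if l ≤ 3 then 1 else (l : ℝ) / 4 := by
  obtain ⟨n, rfl⟩ : ∃ n, l = n + 1 := Nat.exists_eq_add_one.mpr (Fin.pos H.choose)
  apply le_antisymm
  · refine sup'_le _ _ fun j _ => ?_
    have hj : (j : ℝ) ≤ n := by exact_mod_cast Fin.is_le j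
    split_ifs with hj0 hn
    · simp [hj0]
    · have : (3 : ℝ) ≤ n := by exact_mod_cast (by omega : 3 ≤ n)
      simp [hj0]
      linarith
    · have : (n : ℝ) ≤ 2 := by exact_mod_cast (by omega : n ≤ 2)
      linarith
    · push_cast
      linarith
  · split_ifs with hn
    · exact le_sup'_of_le _ (mem_univ 0) (by simp)
    · refine le_sup'_of_le _ (mem_univ (Fin.last n)) ?_
      simp [show n ≠ 0 by omega]
      linarith

/-- Indices are zero-based: `i : Fin l` is the paper's `i + 1`, so `d_j = 1` iff `(j : ℕ) = 0`. -/
theorem stmt6 (l : ℕ) (hl : 2 ≤ l)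
    (x : Fin l → EuclideanSpace ℝ (Fin l))
    (hx : ∀ i, x i = EuclideanSpace.single i (1 : ℝ))
    (α : Fin l → EuclideanSpace ℝ (Fin l))
    (hα : ∀ i : Fin l, α i =
      if h : (i : ℕ) + 1 < l then x i - x ⟨(i : ℕ) + 1, h⟩ else x i)
    (e : Fin l → EuclideanSpace ℝ (Fin l))
    (he : ∀ i j, ⟪e j, α i⟫ =
      if i = j then (if (j : ℕ) = 0 then (1 : ℝ) else 1 / 2) else 0) :
    e ⟨0, by omega⟩ = x ⟨0, by omega⟩ ∧
    (∀ j : Fin l, 1 ≤ (j : ℕ) →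
      e j = (1 / 2 : ℝ) •
        ∑ k ∈ Finset.univ.filter (fun k : Fin l => (k : ℕ) ≤ (j : ℕ)), x k) ∧
    Finset.univ.sup' (Finset.univ_nonempty_iff.mpr ⟨⟨0, by omega⟩⟩)
        (fun j : Fin l => ‖e j‖ ^ 2) =
      if l ≤ 3 then (1 : ℝ) else (l : ℝ) / 4 := by
  obtain rfl : x = fun i => EuclideanSpace.single i 1 := funext hx
  obtain rfl : α = simpleRootB l := funext fun i => by simp [hα, simpleRootB]
  have he_apply (j : Fin l) := apply_eq_of_inner_simpleRootB fun i => he i j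
  refine ⟨?_, fun j hj => ?_, ?_⟩
  · ext i
    simp [he_apply, Fin.le_def, Fin.ext_iff]
  · rw [eq_smul_sum_single_of_apply (he_apply j), if_neg (by omega), ← filter_ge_eq_Iic]
    rfl
  · simp only [norm_sq_of_apply (he_apply _)]
    exact sup'_succ_mul_sq _
end

section
/- Let l ≥ 1, work in EuclideanSpace ℝ (Fin l) with standard orthonormal basis x₁, …, x_l, set α_i = x_i − x_{i+1} for 1 ≤ i ≤ l−1 and α_l = 2x_l, and set d_i = 2 for 1 ≤ i ≤ l−1 and d_l = 1. For each j let e_j be the unique vector with ⟨e_j, α_i⟩ = δ_{ij}/d_j for all i. Then e_j = (1/2) Σ_{k=1}^{j} x_k for all 1 ≤ j ≤ l, and max_{1≤j≤l} ‖e_j‖² = l/4. -/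
/-!
Pairing with the simple roots is a bidiagonal system: `⟪v, α_i⟫ = v_i - v_{i+1}` for `i < l` and
`⟪v, α_l⟫ = 2 v_l`, so back-substitution from the last coordinate shows that a vector is
determined by its pairings with the `α_i`. The vector `(x_1 + ⋯ + x_j) / 2` has the prescribed
pairings, hence equals `e_j`; its squared norm `j / 4` is largest at `j = l`.
-/

open scoped RealInnerProductSpace

namespace RootSystemC

open EuclideanSpace

noncomputable def simpleRoot (l : ℕ) (i : Fin l) : EuclideanSpace ℝ (Fin l) :=
  if h : (i : ℕ) + 1 < l then single i 1 - single ⟨(i : ℕ) + 1, h⟩ 1 else (2 : ℝ) • single i 1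

noncomputable def facetVertex (l : ℕ) (j : Fin l) : EuclideanSpace ℝ (Fin l) :=
  (1 / 2 : ℝ) • ∑ k ∈ Finset.univ.filter (fun k : Fin l => (k : ℕ) ≤ (j : ℕ)), single k 1

variable {l : ℕ}

theorem inner_simpleRoot (v : EuclideanSpace ℝ (Fin l)) (i : Fin l) :
    ⟪v, simpleRoot l i⟫ =
      if h : (i : ℕ) + 1 < l then v i - v ⟨(i : ℕ) + 1, h⟩ else 2 * v i := by
  unfold simpleRoot
  split_ifs <;> simp [inner_sub_right, inner_smul_right, inner_single_right]

theorem eq_zero_of_inner_simpleRoot {v : EuclideanSpace ℝ (Fin l)}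
    (hv : ∀ i, ⟪v, simpleRoot l i⟫ = 0) : v = 0 := by
  ext ⟨k, hk⟩
  refine Nat.decreasingInduction (motive := fun k _ => ∀ hk : k < l, v ⟨k, hk⟩ = 0)
    (fun k hk ih _ => ?_) (fun h => absurd h (lt_irrefl l)) hk.le hk
  have hvk := hv ⟨k, hk⟩
  rw [inner_simpleRoot] at hvk
  split_ifs at hvk with hk'
  · simpa [ih hk'] using hvk
  · simpa using hvk

theorem facetVertex_apply (j k : Fin l) :
    facetVertex l j k = if (k : ℕ) ≤ (j : ℕ) then 1 / 2 else 0 := by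
  simp [facetVertex, Finset.sum_apply]

theorem inner_facetVertex_simpleRoot (i j : Fin l) :
    ⟪facetVertex l j, simpleRoot l i⟫ =
      if i = j then (if (j : ℕ) + 1 = l then 1 else 1 / 2) else 0 := by
  rw [inner_simpleRoot]
  simp only [facetVertex_apply, Fin.ext_iff]
  have := j.isLt
  split_ifs <;> norm_num <;> omega

theorem norm_facetVertex_sq (j : Fin l) : ‖facetVertex l j‖ ^ 2 = ((j : ℕ) + 1) / 4 := by
  have hcard : (Finset.univ.filter (fun k : Fin l => (k : ℕ) ≤ (j : ℕ))).card = (j : ℕ) + 1 := by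
    rw [← Fin.card_Iic j, ← Finset.filter_ge_eq_Iic]
    simp only [Fin.le_def]
  simp only [real_norm_sq_eq, facetVertex_apply, ite_pow, Finset.sum_ite, Finset.sum_const, hcard]
  norm_num
  ring

theorem sup'_succ_div_four (hl : 1 ≤ l) :
    Finset.univ.sup' (Finset.univ_nonempty_iff.mpr ⟨⟨0, hl⟩⟩)
      (fun j : Fin l => (((j : ℕ) : ℝ) + 1) / 4) = (l : ℝ) / 4 := by
  refine le_antisymm (Finset.sup'_le _ _ fun j _ => ?_) ?_
  · gcongr
    exact_mod_cast j.isLt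
  · refine le_trans (le_of_eq ?_) (Finset.le_sup' _ (Finset.mem_univ ⟨l - 1, by omega⟩))
    push_cast [hl]
    ring

end RootSystemC

open RootSystemC in
/-- Indices are zero-based: `i : Fin l` corresponds to `i+1` in the one-based statement, so
`d_j = 1` iff `(j : ℕ) + 1 = l`. -/
theorem stmt7 (l : ℕ) (hl : 1 ≤ l)
    (x : Fin l → EuclideanSpace ℝ (Fin l))
    (hx : ∀ i, x i = EuclideanSpace.single i (1 : ℝ))
    (α : Fin l → EuclideanSpace ℝ (Fin l))
    (hα : ∀ i : Fin l, α i =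
      if h : (i : ℕ) + 1 < l then x i - x ⟨(i : ℕ) + 1, h⟩ else (2 : ℝ) • x i)
    (e : Fin l → EuclideanSpace ℝ (Fin l))
    (he : ∀ i j, ⟪e j, α i⟫ =
      if i = j then (if (j : ℕ) + 1 = l then (1 : ℝ) else 1 / 2) else 0) :
    (∀ j : Fin l, e j = (1 / 2 : ℝ) •
        ∑ k ∈ Finset.univ.filter (fun k : Fin l => (k : ℕ) ≤ (j : ℕ)), x k) ∧
    Finset.univ.sup' (Finset.univ_nonempty_iff.mpr ⟨⟨0, hl⟩⟩)
        (fun j : Fin l => ‖e j‖ ^ 2) = (l : ℝ) / 4 := by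
  obtain rfl : x = fun i => EuclideanSpace.single i 1 := funext hx
  obtain rfl : α = simpleRoot l := funext hα
  have he_eq : ∀ j, e j = facetVertex l j := fun j =>
    sub_eq_zero.mp <| eq_zero_of_inner_simpleRoot fun i => by
      rw [inner_sub_left, he, inner_facetVertex_simpleRoot, sub_self]
  refine ⟨he_eq, ?_⟩
  simp only [he_eq, norm_facetVertex_sq]
  exact sup'_succ_div_four hl
end

section
/- Let l ≥ 4, work in EuclideanSpace ℝ (Fin l) with standard orthonormal basis x₁, …, x_l, set α_i = x_i − x_{i+1} for 1 ≤ i ≤ l−1 and α_l = x_{l−1} + x_l, and set d₁ = d_{l−1} = d_l = 1 and d_i = 2 for 2 ≤ i ≤ l−2. For each j let e_j be the unique vector with ⟨e_j, α_i⟩ = δ_{ij}/d_j for all i. Then e₁ = x₁, e_j = (1/2) Σ_{k=1}^{j} x_k for 2 ≤ j ≤ l−2, e_{l−1} = (1/2)(Σ_{k=1}^{l−1} x_k − x_l), e_l = (1/2) Σ_{k=1}^{l} x_k, and max_{1≤j≤l} ‖e_j‖² = l/4. -/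
/-!
Against the simple roots, `⟪v, α_i⟫ = v_i - v_{i+1}` for `i < l` and `⟪v, α_l⟫ = v_{l-1} + v_l`,
and these `l` functionals determine `v`. Hence `e_j` is the vector whose coordinates are
constant up to position `j` and drop by `1/d_j` after it, the constant being fixed by `α_l`.
Reading off these vectors gives the four formulas. For `j ≥ 2` every coordinate of `e_j` is
`0` or `±1/2`, and all coordinates of `e_l` are `1/2`, so `‖e_j‖² ≤ l/4 = ‖e_l‖²`; finally
`‖e_1‖² = 1 ≤ l/4`.
-/

open scoped RealInnerProductSpace

theorem EuclideanSpace.norm_sq_le_of_forall_abs_le {ι : Type*} [Fintype ι] (v : EuclideanSpace ℝ ι)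
    {c : ℝ} (h : ∀ k, |v k| ≤ c) : ‖v‖ ^ 2 ≤ Fintype.card ι * c ^ 2 := by
  rw [EuclideanSpace.norm_sq_eq]
  calc ∑ k, ‖v k‖ ^ 2 ≤ ∑ _k : ι, c ^ 2 :=
        Finset.sum_le_sum fun k _ => pow_le_pow_left₀ (abs_nonneg _) (h k) 2
    _ = Fintype.card ι * c ^ 2 := by simp

theorem EuclideanSpace.norm_sq_eq_of_forall_abs_eq {ι : Type*} [Fintype ι] (v : EuclideanSpace ℝ ι)
    {c : ℝ} (h : ∀ k, |v k| = c) : ‖v‖ ^ 2 = Fintype.card ι * c ^ 2 := by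
  simp [EuclideanSpace.norm_sq_eq, h]

/-- `1 / d_{j+1}` in the one-based notation of the statement. -/
noncomputable def invMark (l j : ℕ) : ℝ := if j = 0 ∨ j = l - 2 ∨ j = l - 1 then 1 else 1 / 2

noncomputable def facetVertex (l j : ℕ) : EuclideanSpace ℝ (Fin l) :=
  WithLp.toLp 2 fun k => (if j = 0 then 1 else 1 / 2) - if j < k then invMark l j else 0

section FacetVertex

variable {l j : ℕ}

theorem facetVertex_apply (k : Fin l) :
    facetVertex l j k = (if j = 0 then 1 else 1 / 2) - if j < k then invMark l j else 0 := rfl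

theorem facetVertex_sub_succ (i : ℕ) (h : i + 1 < l) :
    facetVertex l j ⟨i, by omega⟩ - facetVertex l j ⟨i + 1, h⟩ =
      if i = j then invMark l j else 0 := by
  simp only [facetVertex_apply]
  split_ifs <;> first | ring1 | omega

theorem facetVertex_add_last (hl : 3 ≤ l) (hj : j < l) :
    facetVertex l j ⟨l - 2, by omega⟩ + facetVertex l j ⟨l - 1, by omega⟩ =
      if j = l - 1 then 1 else 0 := by
  simp only [facetVertex_apply, invMark]
  split_ifs <;> first | omega | norm_num

theorem abs_facetVertex_apply_le (hj : j ≠ 0) (k : Fin l) : |facetVertex l j k| ≤ 1 / 2 := by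
  rw [facetVertex_apply, if_neg hj, invMark]
  split_ifs <;> norm_num

theorem abs_facetVertex_sub_one_apply (hl : 2 ≤ l) (k : Fin l) :
    |facetVertex l (l - 1) k| = 1 / 2 := by
  rw [facetVertex_apply, if_neg (by omega), if_neg (by omega)]
  norm_num

theorem norm_sq_facetVertex_le (hj : j ≠ 0) : ‖facetVertex l j‖ ^ 2 ≤ l / 4 := by
  have := EuclideanSpace.norm_sq_le_of_forall_abs_le _ (abs_facetVertex_apply_le (l := l) hj)
  rw [Fintype.card_fin] at this
  linarith

theorem norm_sq_facetVertex_sub_one (hl : 2 ≤ l) : ‖facetVertex l (l - 1)‖ ^ 2 = l / 4 := by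
  rw [EuclideanSpace.norm_sq_eq_of_forall_abs_eq _ (abs_facetVertex_sub_one_apply hl),
    Fintype.card_fin]
  ring

theorem facetVertex_zero (hl : 0 < l) : facetVertex l 0 = EuclideanSpace.single ⟨0, hl⟩ 1 := by
  ext k
  simp [facetVertex_apply, invMark, Fin.ext_iff]
  split_ifs <;> first | omega | norm_num

theorem facetVertex_of_le (hj : 1 ≤ j) (hjl : j ≤ l - 3) :
    facetVertex l j = (1 / 2 : ℝ) •
      ∑ k ∈ Finset.univ.filter (fun k : Fin l => (k : ℕ) ≤ j), EuclideanSpace.single k 1 := by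
  ext k
  simp [facetVertex_apply, invMark]
  split_ifs <;> first | omega | norm_num

theorem facetVertex_sub_two (hl : 3 ≤ l) :
    facetVertex l (l - 2) = (1 / 2 : ℝ) •
      ((∑ k ∈ Finset.univ.filter (fun k : Fin l => (k : ℕ) ≤ l - 2), EuclideanSpace.single k 1) -
        EuclideanSpace.single ⟨l - 1, by omega⟩ 1) := by
  ext k
  simp [facetVertex_apply, invMark, Fin.ext_iff]
  split_ifs <;> first | omega | norm_num

theorem facetVertex_sub_one (hl : 2 ≤ l) :
    facetVertex l (l - 1) = (1 / 2 : ℝ) • ∑ k : Fin l, EuclideanSpace.single k 1 := by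
  ext k
  simp [facetVertex_apply, invMark]
  split_ifs <;> first | omega | norm_num

end FacetVertex

section SimpleRoots

variable {l : ℕ} (hl : 0 < l) {α : Fin l → EuclideanSpace ℝ (Fin l)}
  (hα : ∀ i : Fin l, α i =
    if h : (i : ℕ) + 1 < l then
      EuclideanSpace.single i 1 - EuclideanSpace.single ⟨(i : ℕ) + 1, h⟩ 1
    else EuclideanSpace.single ⟨l - 2, by omega⟩ 1 + EuclideanSpace.single ⟨l - 1, by omega⟩ 1)
include hα

theorem inner_simpleRoot_of_lt (v : EuclideanSpace ℝ (Fin l)) (i : Fin l) (h : (i : ℕ) + 1 < l) :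
    ⟪v, α i⟫ = v i - v ⟨i + 1, h⟩ := by
  simp [hα, h, inner_sub_right, EuclideanSpace.inner_single_right]

theorem inner_simpleRoot_last (v : EuclideanSpace ℝ (Fin l)) :
    ⟪v, α ⟨l - 1, by omega⟩⟫ = v ⟨l - 2, by omega⟩ + v ⟨l - 1, by omega⟩ := by
  rw [hα, dif_neg (by simp; omega)]
  simp [inner_add_right, EuclideanSpace.inner_single_right]

theorem eq_of_forall_inner_simpleRoot_eq {v w : EuclideanSpace ℝ (Fin l)}
    (h : ∀ i, ⟪v, α i⟫ = ⟪w, α i⟫) : v = w := by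
  rw [← sub_eq_zero]
  set u := v - w
  have hu : ∀ i, ⟪u, α i⟫ = 0 := fun i => by rw [inner_sub_left, h, sub_self]
  have hconst : ∀ k (hk : k < l), u ⟨k, hk⟩ = u ⟨0, by omega⟩ := by
    intro k
    induction k with
    | zero => intro; rfl
    | succ k ih =>
      intro hk
      have := inner_simpleRoot_of_lt hl hα u ⟨k, by omega⟩ hk
      rw [hu] at this
      linarith [ih (by omega)]
  have hzero : u ⟨0, by omega⟩ = 0 := by
    have := inner_simpleRoot_last hl hα u
    rw [hu, hconst (l - 2), hconst (l - 1)] at this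
    linarith
  ext k
  exact (hconst k k.isLt).trans hzero

theorem inner_facetVertex_simpleRoot (hl3 : 3 ≤ l) (i j : Fin l) :
    ⟪facetVertex l j, α i⟫ = if i = j then invMark l j else 0 := by
  by_cases hi : (i : ℕ) + 1 < l
  · rw [inner_simpleRoot_of_lt hl hα _ i hi]
    exact (facetVertex_sub_succ i hi).trans (by simp [Fin.ext_iff])
  · obtain rfl : i = ⟨l - 1, Nat.sub_lt hl one_pos⟩ := Fin.ext (by simp only; omega)
    rw [inner_simpleRoot_last hl hα, facetVertex_add_last hl3 j.isLt]
    simp +contextual [Fin.ext_iff, invMark, eq_comm]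

theorem eq_facetVertex_of_inner_simpleRoot (hl3 : 3 ≤ l) {e : Fin l → EuclideanSpace ℝ (Fin l)}
    (he : ∀ i j, ⟪e j, α i⟫ = if i = j then invMark l j else 0) (j : Fin l) :
    e j = facetVertex l j :=
  eq_of_forall_inner_simpleRoot_eq hl hα fun i => by
    rw [he, inner_facetVertex_simpleRoot hl hα hl3]

end SimpleRoots

/-- (2.13)–(2.14): the vertices `e_j` of the Cartan polyhedron facet for the root
system `d_l` (simple roots `α_i = x_i − x_{i+1}` for `i ≤ l−1`, `α_l = x_{l−1}+x_l`;
coefficients `d₁ = d_{l−1} = d_l = 1`, `d_i = 2` otherwise) and `max_j ‖e_j‖² = l/4`.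
Indices are zero-based: `i : Fin l` corresponds to `i+1` in the one-based statement. -/
theorem stmt8 (l : ℕ) (hl : 4 ≤ l)
    (x : Fin l → EuclideanSpace ℝ (Fin l))
    (hx : ∀ i, x i = EuclideanSpace.single i (1 : ℝ))
    (α : Fin l → EuclideanSpace ℝ (Fin l))
    (hα : ∀ i : Fin l, α i =
      if h : (i : ℕ) + 1 < l then x i - x ⟨(i : ℕ) + 1, h⟩
      else x ⟨l - 2, by omega⟩ + x ⟨l - 1, by omega⟩)
    (e : Fin l → EuclideanSpace ℝ (Fin l))
    (he : ∀ i j, ⟪e j, α i⟫ =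
      if i = j then
        (if (j : ℕ) = 0 ∨ (j : ℕ) = l - 2 ∨ (j : ℕ) = l - 1 then (1 : ℝ) else 1 / 2)
      else 0) :
    e ⟨0, by omega⟩ = x ⟨0, by omega⟩ ∧
    (∀ j : Fin l, 1 ≤ (j : ℕ) → (j : ℕ) ≤ l - 3 →
      e j = (1 / 2 : ℝ) •
        ∑ k ∈ Finset.univ.filter (fun k : Fin l => (k : ℕ) ≤ (j : ℕ)), x k) ∧
    e ⟨l - 2, by omega⟩ = (1 / 2 : ℝ) •
      ((∑ k ∈ Finset.univ.filter (fun k : Fin l => (k : ℕ) ≤ l - 2), x k) -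
        x ⟨l - 1, by omega⟩) ∧
    e ⟨l - 1, by omega⟩ = (1 / 2 : ℝ) • ∑ k, x k ∧
    Finset.univ.sup' (Finset.univ_nonempty_iff.mpr ⟨⟨0, by omega⟩⟩)
        (fun j : Fin l => ‖e j‖ ^ 2) = (l : ℝ) / 4 := by
  obtain rfl : x = fun i => EuclideanSpace.single i 1 := funext hx
  have hE := eq_facetVertex_of_inner_simpleRoot (by omega) hα (by omega) he
  refine ⟨?_, fun j hj hjl => ?_, ?_, ?_, ?_⟩
  · rw [hE]; exact facetVertex_zero _
  · rw [hE]; exact facetVertex_of_le hj hjl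
  · rw [hE]; exact facetVertex_sub_two (by omega)
  · rw [hE]; exact facetVertex_sub_one (by omega)
  refine le_antisymm (Finset.sup'_le _ _ fun j _ => ?_) ?_
  · rcases eq_or_ne (j : ℕ) 0 with hj | hj
    · rw [hE, hj, facetVertex_zero (by omega), PiLp.norm_single, norm_one, one_pow,
        le_div_iff₀ four_pos, one_mul]
      exact_mod_cast hl
    · rw [hE]; exact norm_sq_facetVertex_le hj
  · refine Finset.le_sup'_of_le _ (Finset.mem_univ ⟨l - 1, by omega⟩) ?_
    rw [hE]; exact (norm_sq_facetVertex_sub_one (by omega)).ge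
end

section
/- Let l ≥ 1, work in EuclideanSpace ℝ (Fin l) with standard orthonormal basis x₁, …, x_l, set α_i = x_i − x_{i+1} for 1 ≤ i ≤ l−1 and α_l = x_l, and set d_i = 2 for all 1 ≤ i ≤ l. For each j let e_j be the unique vector with ⟨e_j, α_i⟩ = δ_{ij}/d_j for all i. Then e_j = (1/2) Σ_{k=1}^{j} x_k for all 1 ≤ j ≤ l, and max_{1≤j≤l} ‖e_j‖² = l/4. -/
/-! Pairing `e_j` with the simple roots `α_i = x_i - x_{i+1}` and `α_l = x_l` gives the
differences of consecutive coordinates of `e_j` and its last coordinate, so the coordinates are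
determined by downward recursion from the last one: they equal `1/2` up to position `j` and
vanish afterwards. Hence `‖e_j‖² = j/4` (one-based), which is largest at `j = l`. -/

open scoped RealInnerProductSpace
open Finset

theorem Fin.eq_of_eq_last_of_sub_succ_eq {M : Type*} [AddCommGroup M] {n : ℕ}
    {f g : Fin (n + 1) → M} (hlast : f (Fin.last n) = g (Fin.last n))
    (hstep : ∀ i : Fin n, f i.castSucc - f i.succ = g i.castSucc - g i.succ) : f = g := by
  funext i
  induction i using Fin.reverseInduction with
  | last => exact hlast
  | cast i ih => simpa [ih] using hstep i

theorem Fin.sup'_univ_eq_last_of_monotone {α : Type*} [SemilatticeSup α] {n : ℕ}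
    {f : Fin (n + 1) → α} (hf : Monotone f) (H : (univ : Finset (Fin (n + 1))).Nonempty) :
    univ.sup' H f = f (Fin.last n) :=
  le_antisymm (sup'_le _ _ fun j _ => hf (Fin.le_last j)) (le_sup' f (mem_univ _))

theorem EuclideanSpace.norm_sum_single_one_sq {ι : Type*} [Fintype ι] [DecidableEq ι]
    (s : Finset ι) : ‖∑ k ∈ s, EuclideanSpace.single k (1 : ℝ)‖ ^ 2 = #s := by
  rw [EuclideanSpace.norm_sq_eq]
  simp [Finset.sum_apply]

noncomputable def bcSimpleRoot {l : ℕ} (i : Fin l) : EuclideanSpace ℝ (Fin l) :=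
  if h : (i : ℕ) + 1 < l then EuclideanSpace.single i 1 - EuclideanSpace.single ⟨i + 1, h⟩ 1
  else EuclideanSpace.single i 1

section

variable {n : ℕ} (v : EuclideanSpace ℝ (Fin (n + 1)))

theorem inner_bcSimpleRoot_castSucc (i : Fin n) :
    ⟪v, bcSimpleRoot i.castSucc⟫ = v i.castSucc - v i.succ := by
  rw [bcSimpleRoot, dif_pos (by simp), inner_sub_right]
  simp [EuclideanSpace.inner_single_right, Fin.succ]

theorem inner_bcSimpleRoot_last : ⟪v, bcSimpleRoot (Fin.last n)⟫ = v (Fin.last n) := by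
  rw [bcSimpleRoot, dif_neg (by simp)]
  simp [EuclideanSpace.inner_single_right]

theorem eq_half_sum_single_of_inner_bcSimpleRoot {j : Fin (n + 1)}
    (h : ∀ i, ⟪v, bcSimpleRoot i⟫ = if i = j then (1 / 2 : ℝ) else 0) :
    v = (1 / 2 : ℝ) • ∑ k ∈ Iic j, EuclideanSpace.single k 1 := by
  have hcoord : (fun i => v i) = fun i => if i ≤ j then (1 / 2 : ℝ) else 0 := by
    refine Fin.eq_of_eq_last_of_sub_succ_eq ?_ fun i => ?_
    · rw [← inner_bcSimpleRoot_last, h]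
      simp [Fin.last_le_iff, eq_comm]
    · rw [← inner_bcSimpleRoot_castSucc, h]
      split_ifs <;> grind
  ext i
  simpa [Finset.sum_apply] using congrFun hcoord i

end

/-- (2.20)–(2.21): the vertices `e_j` of the Cartan polyhedron facet for the
nonreduced root system `(bc)_l` (indivisible roots of type `b_l`: simple roots
`α_i = x_i − x_{i+1}` for `i < l`, `α_l = x_l`; all coefficients `d_i = 2`) and
the value `max_j ‖e_j‖² = l/4`. Indices are zero-based. -/
theorem stmt9 (l : ℕ) (hl : 1 ≤ l)
    (x : Fin l → EuclideanSpace ℝ (Fin l))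
    (hx : ∀ i, x i = EuclideanSpace.single i (1 : ℝ))
    (α : Fin l → EuclideanSpace ℝ (Fin l))
    (hα : ∀ i : Fin l, α i =
      if h : (i : ℕ) + 1 < l then x i - x ⟨(i : ℕ) + 1, h⟩ else x i)
    (e : Fin l → EuclideanSpace ℝ (Fin l))
    (he : ∀ i j, ⟪e j, α i⟫ = if i = j then (1 / 2 : ℝ) else 0) :
    (∀ j : Fin l, e j = (1 / 2 : ℝ) •
        ∑ k ∈ Finset.univ.filter (fun k : Fin l => (k : ℕ) ≤ (j : ℕ)), x k) ∧
    Finset.univ.sup' (Finset.univ_nonempty_iff.mpr ⟨⟨0, hl⟩⟩)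
        (fun j : Fin l => ‖e j‖ ^ 2) = (l : ℝ) / 4 := by
  obtain ⟨n, rfl⟩ : ∃ n, l = n + 1 := ⟨l - 1, by omega⟩
  obtain rfl : x = fun i => EuclideanSpace.single i 1 := funext hx
  obtain rfl : α = bcSimpleRoot := funext hα
  have he_eq (j : Fin (n + 1)) : e j = (1 / 2 : ℝ) • ∑ k ∈ Iic j, EuclideanSpace.single k 1 :=
    eq_half_sum_single_of_inner_bcSimpleRoot (e j) (he · j)
  have hIic (j : Fin (n + 1)) : univ.filter (fun k : Fin (n + 1) => (k : ℕ) ≤ (j : ℕ)) = Iic j :=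
    Finset.ext fun k => by simp
  have hnorm (j : Fin (n + 1)) : ‖e j‖ ^ 2 = ((j : ℝ) + 1) / 4 := by
    rw [he_eq, norm_smul, mul_pow, EuclideanSpace.norm_sum_single_one_sq, Fin.card_Iic]
    norm_num
    ring
  have hmono : Monotone fun j : Fin (n + 1) => ‖e j‖ ^ 2 := fun i j hij => by
    simp only [hnorm]
    gcongr
    exact hij
  refine ⟨fun j => by rw [he_eq, hIic], ?_⟩
  rw [Fin.sup'_univ_eq_last_of_monotone hmono, hnorm]
  simp
end

section
/- Let c > 0 be a real number, let M be the 6×6 symmetric integer matrix with M_{ii} = 2 on the diagonal, M_{ij} = −1 for the unordered pairs {i,j} ∈ {{1,2},{2,3},{3,4},{4,5},{3,6}}, and M_{ij} = 0 otherwise, let Ω = (c/2)·M, and let (d₁,…,d₆) = (1,2,3,2,1,2). Then max_{1≤j≤6} (1/d_j) ((Ω^{-1})_{jj})^{1/2} = (2√6/3) · c^{-1/2}. -/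
section vec6
variable {α : Type*} (a b c d e f : α)
lemma v6_0 : ![a,b,c,d,e,f] 0 = a := rfl
lemma v6_1 : ![a,b,c,d,e,f] 1 = b := rfl
lemma v6_2 : ![a,b,c,d,e,f] 2 = c := rfl
lemma v6_3 : ![a,b,c,d,e,f] 3 = d := rfl
lemma v6_4 : ![a,b,c,d,e,f] 4 = e := rfl
lemma v6_5 : ![a,b,c,d,e,f] 5 = f := rfl
lemma w6_0 (h : 0 < 6) : ![a,b,c,d,e,f] ⟨0,h⟩ = a := rfl
lemma w6_1 (h : 1 < 6) : ![a,b,c,d,e,f] ⟨1,h⟩ = b := rfl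
lemma w6_2 (h : 2 < 6) : ![a,b,c,d,e,f] ⟨2,h⟩ = c := rfl
lemma w6_3 (h : 3 < 6) : ![a,b,c,d,e,f] ⟨3,h⟩ = d := rfl
lemma w6_4 (h : 4 < 6) : ![a,b,c,d,e,f] ⟨4,h⟩ = e := rfl
lemma w6_5 (h : 5 < 6) : ![a,b,c,d,e,f] ⟨5,h⟩ = f := rfl
end vec6


set_option maxHeartbeats 1000000 in
/-- (2.15): computation of `d(e₆) = max_j (1/d_j)√((Ω⁻¹)_{jj}) = (2√6/3)·c^{-1/2}`,
where `Ω = (c/2)·M` is the Gram matrix of the simple roots of `e₆` and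
`(d₁,…,d₆) = (1,2,3,2,1,2)` are the coefficients of the highest root. -/
theorem stmt10 (c : ℝ) (hc : 0 < c)
    (M : Matrix (Fin 6) (Fin 6) ℝ)
    (hM : M = !![2,-1,0,0,0,0;
                 -1,2,-1,0,0,0;
                 0,-1,2,-1,0,-1;
                 0,0,-1,2,-1,0;
                 0,0,0,-1,2,0;
                 0,0,-1,0,0,2])
    (Ω : Matrix (Fin 6) (Fin 6) ℝ) (hΩ : Ω = (c / 2) • M)
    (d : Fin 6 → ℝ) (hd : d = ![1,2,3,2,1,2]) :
    Finset.univ.sup' Finset.univ_nonempty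
        (fun j => (1 / d j) * Real.sqrt (Ω⁻¹ j j)) =
      (2 * Real.sqrt 6 / 3) * (Real.sqrt c)⁻¹ := by
  have hc' : c ≠ 0 := ne_of_gt hc
  set N : Matrix (Fin 6) (Fin 6) ℝ := !![4/3, 5/3, 2, 4/3, 2/3, 1;
      5/3, 10/3, 4, 8/3, 4/3, 2;
      2, 4, 6, 4, 2, 3;
      4/3, 8/3, 4, 10/3, 5/3, 2;
      2/3, 4/3, 2, 5/3, 4/3, 1;
      1, 2, 3, 2, 1, 2] with hN
  have hMN : M * N = 1 := by
    subst hM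
    ext i j
    fin_cases i <;> fin_cases j <;>
      · simp only [hN, Matrix.mul_apply, Fin.sum_univ_six, Matrix.of_apply,
          v6_0, v6_1, v6_2, v6_3, v6_4, v6_5,
          w6_0, w6_1, w6_2, w6_3, w6_4, w6_5, Matrix.one_apply]
        norm_num [Fin.ext_iff]
  have hinv : Ω⁻¹ = (2/c) • N := by
    apply Matrix.inv_eq_right_inv
    rw [hΩ, Matrix.smul_mul, Matrix.mul_smul, hMN, smul_smul]
    rw [show c / 2 * (2 / c) = 1 by field_simp]
    simp
  have hsc : (0:ℝ) < Real.sqrt c := Real.sqrt_pos.mpr hc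
  have hT : (2 * Real.sqrt 6 / 3) * (Real.sqrt c)⁻¹ = Real.sqrt (8/3) / Real.sqrt c := by
    rw [div_eq_mul_inv _ (Real.sqrt c)]
    congr 1
    rw [show (8/3 : ℝ) = (2 * Real.sqrt 6 / 3)^2 by
      have := Real.sq_sqrt (by norm_num : (0:ℝ) ≤ 6)
      nlinarith [this]]
    rw [Real.sqrt_sq (by positivity)]
  have key : ∀ t n : ℝ, 0 < t → 0 ≤ n → 2*n ≤ (8/3)*t^2 →
      (1/t) * Real.sqrt (2/c * n) ≤ Real.sqrt (8/3) / Real.sqrt c := by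
    intro t n ht hn h
    rw [show 2/c*n = (2*n)/c by ring, Real.sqrt_div (by positivity)]
    rw [show (1:ℝ)/t * (Real.sqrt (2*n)/Real.sqrt c)
        = (Real.sqrt (2*n)/t)/Real.sqrt c by ring]
    rw [div_le_div_iff_of_pos_right hsc, div_le_iff₀ ht]
    calc Real.sqrt (2*n) ≤ Real.sqrt ((8/3)*t^2) := Real.sqrt_le_sqrt h
      _ = Real.sqrt (8/3) * t := by
          rw [Real.sqrt_mul (by norm_num), Real.sqrt_sq ht.le]
  subst hd
  apply le_antisymm
  · apply Finset.sup'_le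
    intro j _
    fin_cases j <;>
      · simp only [hinv, hN, Matrix.smul_apply, smul_eq_mul, Matrix.of_apply,
          v6_0, v6_1, v6_2, v6_3, v6_4, v6_5,
          w6_0, w6_1, w6_2, w6_3, w6_4, w6_5, hT]
        exact key _ _ (by norm_num) (by norm_num) (by norm_num)
  · refine le_trans ?_ (Finset.le_sup' _ (Finset.mem_univ (0 : Fin 6)))
    simp only [hinv, hN, Matrix.smul_apply, smul_eq_mul, Matrix.of_apply,
      v6_0, v6_1, v6_2, v6_3, v6_4, v6_5,
      w6_0, w6_1, w6_2, w6_3, w6_4, w6_5, hT]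
    rw [show (2:ℝ)/c * (4/3) = (8/3)/c by ring, Real.sqrt_div (by norm_num)]
    norm_num
end

section
/- Let c > 0 be a real number, let M be the 7×7 symmetric integer matrix with M_{ii} = 2 on the diagonal, M_{ij} = −1 for the unordered pairs {i,j} ∈ {{1,2},{2,3},{3,4},{4,5},{5,6},{4,7}}, and M_{ij} = 0 otherwise, let Ω = (c/2)·M, and let (d₁,…,d₇) = (1,2,3,4,3,2,2). Then max_{1≤j≤7} (1/d_j) ((Ω^{-1})_{jj})^{1/2} = √3 · c^{-1/2}. -/
@[local simp] lemma v7_0 {α : Type*} (a0 a1 a2 a3 a4 a5 a6 : α) :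
    ![a0,a1,a2,a3,a4,a5,a6] 0 = a0 := rfl
@[local simp] lemma v7_1 {α : Type*} (a0 a1 a2 a3 a4 a5 a6 : α) :
    ![a0,a1,a2,a3,a4,a5,a6] 1 = a1 := rfl
@[local simp] lemma v7_2 {α : Type*} (a0 a1 a2 a3 a4 a5 a6 : α) :
    ![a0,a1,a2,a3,a4,a5,a6] 2 = a2 := rfl
@[local simp] lemma v7_3 {α : Type*} (a0 a1 a2 a3 a4 a5 a6 : α) :
    ![a0,a1,a2,a3,a4,a5,a6] 3 = a3 := rfl
@[local simp] lemma v7_4 {α : Type*} (a0 a1 a2 a3 a4 a5 a6 : α) :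
    ![a0,a1,a2,a3,a4,a5,a6] 4 = a4 := rfl
@[local simp] lemma v7_5 {α : Type*} (a0 a1 a2 a3 a4 a5 a6 : α) :
    ![a0,a1,a2,a3,a4,a5,a6] 5 = a5 := rfl
@[local simp] lemma v7_6 {α : Type*} (a0 a1 a2 a3 a4 a5 a6 : α) :
    ![a0,a1,a2,a3,a4,a5,a6] 6 = a6 := rfl

lemma stmt11_aux (c : ℝ) (hc : 0 < c) (b e : ℝ) (hb : 0 ≤ b) (he : 0 < e)
    (h : b ≤ 3 * e ^ 2) :
    (1 / e) * Real.sqrt (b / c) ≤ Real.sqrt 3 * (Real.sqrt c)⁻¹ := by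
  have h1 : Real.sqrt b ≤ Real.sqrt 3 * e := by
    rw [← Real.sqrt_sq he.le, ← Real.sqrt_mul (by norm_num : (0:ℝ) ≤ 3)]
    exact Real.sqrt_le_sqrt h
  rw [Real.sqrt_div hb, div_eq_mul_inv (Real.sqrt b), ← mul_assoc]
  apply mul_le_mul_of_nonneg_right _ (by positivity)
  rw [one_div, inv_mul_le_iff₀ he]
  linarith [h1]

set_option maxHeartbeats 1600000 in
/-- (2.16): computation of `d(e₇) = max_j (1/d_j)√((Ω⁻¹)_{jj}) = √3·c^{-1/2}`,
where `Ω = (c/2)·M` is the Gram matrix of the simple roots of `e₇` and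
`(d₁,…,d₇) = (1,2,3,4,3,2,2)` are the coefficients of the highest root. -/
theorem stmt11 (c : ℝ) (hc : 0 < c)
    (M : Matrix (Fin 7) (Fin 7) ℝ)
    (hM : M = !![2,-1,0,0,0,0,0;
                 -1,2,-1,0,0,0,0;
                 0,-1,2,-1,0,0,0;
                 0,0,-1,2,-1,0,-1;
                 0,0,0,-1,2,-1,0;
                 0,0,0,0,-1,2,0;
                 0,0,0,-1,0,0,2])
    (Ω : Matrix (Fin 7) (Fin 7) ℝ) (hΩ : Ω = (c / 2) • M)
    (d : Fin 7 → ℝ) (hd : d = ![1,2,3,4,3,2,2]) :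
    Finset.univ.sup' Finset.univ_nonempty
        (fun j => (1 / d j) * Real.sqrt (Ω⁻¹ j j)) =
      Real.sqrt 3 * (Real.sqrt c)⁻¹ := by
  have hc' : c ≠ 0 := hc.ne'
  set B : Matrix (Fin 7) (Fin 7) ℝ := !![3/2,2,5/2,3,2,1,3/2;
      2,4,5,6,4,2,3;
      5/2,5,15/2,9,6,3,9/2;
      3,6,9,12,8,4,6;
      2,4,6,8,6,3,4;
      1,2,3,4,3,2,2;
      3/2,3,9/2,6,4,2,7/2] with hB
  have hMB : M * B = 1 := by
    rw [hM, hB]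
    ext i j
    rw [Matrix.mul_apply, Fin.sum_univ_seven]
    fin_cases i <;> fin_cases j <;>
      simp only [Matrix.of_apply, v7_0, v7_1, v7_2, v7_3, v7_4, v7_5, v7_6,
        Matrix.one_apply] <;>
      norm_num [Fin.ext_iff]
  have hinv : Ω⁻¹ = (2 / c) • B := by
    apply Matrix.inv_eq_right_inv
    rw [hΩ, Matrix.smul_mul, Matrix.mul_smul, smul_smul,
      show c / 2 * (2 / c) = 1 by field_simp, one_smul, hMB]
  apply le_antisymm
  · apply Finset.sup'_le
    intro j _
    rw [hinv, hd]
    fin_cases j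
    · show (1:ℝ)/1 * Real.sqrt (2/c * (3/2)) ≤ Real.sqrt 3 * (Real.sqrt c)⁻¹
      rw [show (2:ℝ)/c * (3/2) = 3/c by field_simp; try ring]
      exact stmt11_aux c hc 3 1 (by norm_num) one_pos (by norm_num)
    · show (1:ℝ)/2 * Real.sqrt (2/c * 4) ≤ Real.sqrt 3 * (Real.sqrt c)⁻¹
      rw [show (2:ℝ)/c * 4 = 8/c by field_simp; try ring]
      exact stmt11_aux c hc 8 2 (by norm_num) two_pos (by norm_num)
    · show (1:ℝ)/3 * Real.sqrt (2/c * (15/2)) ≤ Real.sqrt 3 * (Real.sqrt c)⁻¹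
      rw [show (2:ℝ)/c * (15/2) = 15/c by field_simp; try ring]
      exact stmt11_aux c hc 15 3 (by norm_num) (by norm_num) (by norm_num)
    · show (1:ℝ)/4 * Real.sqrt (2/c * 12) ≤ Real.sqrt 3 * (Real.sqrt c)⁻¹
      rw [show (2:ℝ)/c * 12 = 24/c by field_simp; try ring]
      exact stmt11_aux c hc 24 4 (by norm_num) (by norm_num) (by norm_num)
    · show (1:ℝ)/3 * Real.sqrt (2/c * 6) ≤ Real.sqrt 3 * (Real.sqrt c)⁻¹
      rw [show (2:ℝ)/c * 6 = 12/c by field_simp; try ring]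
      exact stmt11_aux c hc 12 3 (by norm_num) (by norm_num) (by norm_num)
    · show (1:ℝ)/2 * Real.sqrt (2/c * 2) ≤ Real.sqrt 3 * (Real.sqrt c)⁻¹
      rw [show (2:ℝ)/c * 2 = 4/c by field_simp; try ring]
      exact stmt11_aux c hc 4 2 (by norm_num) two_pos (by norm_num)
    · show (1:ℝ)/2 * Real.sqrt (2/c * (7/2)) ≤ Real.sqrt 3 * (Real.sqrt c)⁻¹
      rw [show (2:ℝ)/c * (7/2) = 7/c by field_simp; try ring]
      exact stmt11_aux c hc 7 2 (by norm_num) two_pos (by norm_num)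
  · have h0 := Finset.le_sup' (fun j => (1 / d j) * Real.sqrt (Ω⁻¹ j j))
      (Finset.mem_univ (0 : Fin 7))
    refine le_trans (le_of_eq ?_) h0
    rw [hinv, hd]
    show Real.sqrt 3 * (Real.sqrt c)⁻¹ = (1:ℝ)/1 * Real.sqrt (2/c * (3/2))
    rw [show (2:ℝ)/c * (3/2) = 3/c by field_simp; try ring,
      Real.sqrt_div (by norm_num : (0:ℝ) ≤ 3), div_eq_mul_inv]
    norm_num [div_eq_mul_inv]
end

section
/- Let c > 0 be a real number, let M be the 8×8 symmetric integer matrix with M_{ii} = 2 on the diagonal, M_{ij} = −1 for the unordered pairs {i,j} ∈ {{1,2},{2,3},{3,4},{4,5},{5,6},{6,7},{5,8}}, and M_{ij} = 0 otherwise, let Ω = (c/2)·M, and let (d₁,…,d₈) = (2,3,4,5,6,4,2,3). Then max_{1≤j≤8} (1/d_j) ((Ω^{-1})_{jj})^{1/2} = √2 · c^{-1/2}. -/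
open Matrix in
@[simp] private lemma cons_val_five {α : Type*} {m : ℕ} (x : α)
    (u : Fin m.succ.succ.succ.succ.succ → α) :
    vecCons x u 5 = vecHead (vecTail (vecTail (vecTail (vecTail u)))) := rfl
open Matrix in
@[simp] private lemma cons_val_six {α : Type*} {m : ℕ} (x : α)
    (u : Fin m.succ.succ.succ.succ.succ.succ → α) :
    vecCons x u 6 = vecHead (vecTail (vecTail (vecTail (vecTail (vecTail u))))) := rfl
open Matrix in
@[simp] private lemma cons_val_seven {α : Type*} {m : ℕ} (x : α)
    (u : Fin m.succ.succ.succ.succ.succ.succ.succ → α) :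
    vecCons x u 7 = vecHead (vecTail (vecTail (vecTail (vecTail (vecTail (vecTail u)))))) := rfl

/-- The inverse of the `e₈` Cartan matrix. -/
private def Ninv : Matrix (Fin 8) (Fin 8) ℝ :=
  !![2,3,4,5,6,4,2,3;
     3,6,8,10,12,8,4,6;
     4,8,12,15,18,12,6,9;
     5,10,15,20,24,16,8,12;
     6,12,18,24,30,20,10,15;
     4,8,12,16,20,14,7,10;
     2,4,6,8,10,7,4,5;
     3,6,9,12,15,10,5,8]

private lemma key (c : ℝ) (hc : 0 < c) (n dj : ℝ) (hdj : 0 < dj) (hn : 0 ≤ n)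
    (h : n ≤ dj ^ 2) :
    (1 / dj) * Real.sqrt ((2 / c) * n) ≤ Real.sqrt 2 * (Real.sqrt c)⁻¹ := by
  have hsc : 0 < Real.sqrt c := Real.sqrt_pos.mpr hc
  have h1 : Real.sqrt ((2 / c) * n) = Real.sqrt 2 / Real.sqrt c * Real.sqrt n := by
    rw [Real.sqrt_mul (by positivity), Real.sqrt_div (by norm_num : (0:ℝ) ≤ 2)]
  have h2 : Real.sqrt n ≤ dj := by
    calc Real.sqrt n ≤ Real.sqrt (dj ^ 2) := Real.sqrt_le_sqrt h
    _ = dj := by rw [Real.sqrt_sq hdj.le]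
  rw [h1]
  calc (1 / dj) * (Real.sqrt 2 / Real.sqrt c * Real.sqrt n)
      ≤ (1 / dj) * (Real.sqrt 2 / Real.sqrt c * dj) := by gcongr
    _ = Real.sqrt 2 * (Real.sqrt c)⁻¹ := by field_simp

/-- (2.17): computation of `d(e₈) = max_j (1/d_j)√((Ω⁻¹)_{jj}) = √2·c^{-1/2}`,
where `Ω = (c/2)·M` is the Gram matrix of the simple roots of `e₈` and
`(d₁,…,d₈) = (2,3,4,5,6,4,2,3)` are the coefficients of the highest root. -/
theorem stmt12 (c : ℝ) (hc : 0 < c)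
    (M : Matrix (Fin 8) (Fin 8) ℝ)
    (hM : M = !![2,-1,0,0,0,0,0,0;
                 -1,2,-1,0,0,0,0,0;
                 0,-1,2,-1,0,0,0,0;
                 0,0,-1,2,-1,0,0,0;
                 0,0,0,-1,2,-1,0,-1;
                 0,0,0,0,-1,2,-1,0;
                 0,0,0,0,0,-1,2,0;
                 0,0,0,0,-1,0,0,2])
    (Ω : Matrix (Fin 8) (Fin 8) ℝ) (hΩ : Ω = (c / 2) • M)
    (d : Fin 8 → ℝ) (hd : d = ![2,3,4,5,6,4,2,3]) :
    Finset.univ.sup' Finset.univ_nonempty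
        (fun j => (1 / d j) * Real.sqrt (Ω⁻¹ j j)) =
      Real.sqrt 2 * (Real.sqrt c)⁻¹ := by
  have hc' : c ≠ 0 := hc.ne'
  have hMN : M * Ninv = 1 := by
    subst hM
    ext i j
    fin_cases i <;> fin_cases j <;>
      norm_num [Ninv, Matrix.mul_apply, Fin.sum_univ_succ, Matrix.one_apply, Fin.ext_iff]
  have hinv : Ω⁻¹ = (2 / c) • Ninv := by
    apply Matrix.inv_eq_right_inv
    rw [hΩ, Matrix.smul_mul, Matrix.mul_smul, smul_smul, hMN]
    rw [show (c / 2) * (2 / c) = 1 by field_simp]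
    simp
  have hdiag : ∀ j : Fin 8, Ω⁻¹ j j = (2 / c) * Ninv j j := by
    intro j; rw [hinv]; rfl
  apply le_antisymm
  · apply Finset.sup'_le
    intro j _
    have h1 : 0 < d j := by rw [hd]; fin_cases j <;> norm_num
    have h2 : 0 ≤ Ninv j j := by fin_cases j <;> norm_num [Ninv]
    have h3 : Ninv j j ≤ (d j) ^ 2 := by rw [hd]; fin_cases j <;> norm_num [Ninv]
    rw [hdiag]
    exact key c hc _ _ h1 h2 h3
  · have hle := Finset.le_sup' (fun j => (1 / d j) * Real.sqrt (Ω⁻¹ j j))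
      (Finset.mem_univ (6 : Fin 8))
    refine le_trans (le_of_eq ?_) hle
    rw [hdiag, hd]
    have hN66 : Ninv (6 : Fin 8) (6 : Fin 8) = 4 := rfl
    have hd6 : (![2,3,4,5,6,4,2,3] : Fin 8 → ℝ) (6 : Fin 8) = 2 := rfl
    rw [hN66, hd6]
    have hsq : Real.sqrt ((2 : ℝ) / c * 4) = 2 * Real.sqrt 2 / Real.sqrt c := by
      rw [show (2 : ℝ) / c * 4 = 8 / c by ring,
        Real.sqrt_div (by norm_num : (0:ℝ) ≤ 8),
        show (8 : ℝ) = 2 ^ 2 * 2 by norm_num,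
        Real.sqrt_mul (by positivity), Real.sqrt_sq (by norm_num)]
    rw [hsq]
    field_simp
end

section
/- Let c > 0 be a real number, let M be the 4×4 matrix [[4,−2,0,0],[−2,4,−2,0],[0,−2,2,−1],[0,0,−1,2]], let Ω = (c/4)·M, and let (d₁,…,d₄) = (2,3,4,2). Then max_{1≤j≤4} (1/d_j) ((Ω^{-1})_{jj})^{1/2} = √2 · c^{-1/2}. -/
open Matrix

/-! The diagonal of `Ω⁻¹ = (4/c) • M⁻¹` is `(4/c)·(1, 3, 6, 2)`, so the `j`-th quantity equals
`√(q_j / c)` with `q = 4·(1, 3, 6, 2)/d² = (1, 4/3, 3/2, 2)`; as `√(· / c)` is monotone the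
maximum is attained at `j = 4`, giving `√(2/c)`. -/

lemma Matrix.inv_smul_of_mul_eq_one {n K : Type*} [Fintype n] [DecidableEq n] [Field K]
    {A B : Matrix n n K} (h : A * B = 1) {a : K} (ha : a ≠ 0) : (a • A)⁻¹ = a⁻¹ • B :=
  inv_eq_right_inv (by rw [smul_mul_smul_comm, h, mul_inv_cancel₀ ha, one_smul])

lemma Real.one_div_mul_sqrt {d : ℝ} (hd : 0 ≤ d) (x : ℝ) : 1 / d * √x = √(x / d ^ 2) := by
  rw [Real.sqrt_div' x (sq_nonneg d), Real.sqrt_sq hd, one_div_mul_eq_div]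

/-- `4/⟨ψ,ψ⟩` times the Gram matrix of the simple roots of `f₄`. -/
def f4NormalizedGram : Matrix (Fin 4) (Fin 4) ℝ :=
  !![4, -2, 0, 0; -2, 4, -2, 0; 0, -2, 2, -1; 0, 0, -1, 2]

noncomputable def f4NormalizedGramInv : Matrix (Fin 4) (Fin 4) ℝ :=
  !![1, 3/2, 2, 1; 3/2, 3, 4, 2; 2, 4, 6, 3; 1, 2, 3, 2]

lemma f4NormalizedGram_mul_inv : f4NormalizedGram * f4NormalizedGramInv = 1 := by
  ext i j
  fin_cases i <;> fin_cases j <;>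
    simp [f4NormalizedGram, f4NormalizedGramInv, mul_apply, Fin.sum_univ_four] <;> norm_num

/-- (2.18): computation of `d(f₄) = max_j (1/d_j)√((Ω⁻¹)_{jj}) = √2·c^{-1/2}`,
where `Ω = (c/4)·M` is the Gram matrix of the simple roots of `f₄` and
`(d₁,…,d₄) = (2,3,4,2)` are the coefficients of the highest root. -/
theorem stmt13 (c : ℝ) (hc : 0 < c)
    (M : Matrix (Fin 4) (Fin 4) ℝ)
    (hM : M = !![4,-2,0,0;
                 -2,4,-2,0;
                 0,-2,2,-1;
                 0,0,-1,2])
    (Ω : Matrix (Fin 4) (Fin 4) ℝ) (hΩ : Ω = (c / 4) • M)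
    (d : Fin 4 → ℝ) (hd : d = ![2,3,4,2]) :
    Finset.univ.sup' Finset.univ_nonempty
        (fun j => (1 / d j) * Real.sqrt (Ω⁻¹ j j)) =
      Real.sqrt 2 * (Real.sqrt c)⁻¹ := by
  have hinv : Ω⁻¹ = (4 / c) • f4NormalizedGramInv := by
    rw [hΩ, hM, ← inv_div c 4]
    exact inv_smul_of_mul_eq_one f4NormalizedGram_mul_inv (by positivity)
  set q : Fin 4 → ℝ := ![1, 4/3, 3/2, 2]
  have hterm : ∀ j, 1 / d j * √(Ω⁻¹ j j) = √(q j / c) := by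
    intro j
    rw [Real.one_div_mul_sqrt (by fin_cases j <;> norm_num [hd]), hinv]
    congr 1
    fin_cases j <;> norm_num [hd, q, f4NormalizedGramInv] <;> ring
  have hmono : Monotone fun t => √(t / c) := fun s t hst =>
    Real.sqrt_le_sqrt (div_le_div_of_nonneg_right hst hc.le)
  have hmax : Finset.univ.sup' Finset.univ_nonempty q = 2 :=
    le_antisymm (Finset.sup'_le _ _ fun j _ => by fin_cases j <;> norm_num [q])
      (Finset.le_sup' q (Finset.mem_univ 3))
  calc Finset.univ.sup' Finset.univ_nonempty (fun j => 1 / d j * √(Ω⁻¹ j j))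
      = Finset.univ.sup' Finset.univ_nonempty ((fun t => √(t / c)) ∘ q) := by
        simp only [hterm]; rfl
    _ = √(2 / c) := by rw [← Finset.apply_sup'_eq_sup'_comp _ _ fun _ _ => hmono.map_sup _ _, hmax]
    _ = √2 * (√c)⁻¹ := by rw [Real.sqrt_div' 2 hc.le, div_eq_mul_inv]
end

section
/- Let V be a finite-dimensional real inner product space, let Δ ⊂ V be a finite set of nonzero vectors with Δ = −Δ, and suppose the inner product satisfies ⟨x,y⟩ = Σ_{α∈Δ} ⟨α,x⟩⟨α,y⟩ for all x, y ∈ V. Let δ ∈ Δ be such that for every α ∈ Δ with α ≠ δ and α ≠ −δ, the number 2⟨α,δ⟩/⟨δ,δ⟩ belongs to {−1, 0, 1}. Then ⟨δ,δ⟩ = 4 / ( |Δ| − |{α ∈ Δ : ⟨α,δ⟩ = 0}| + 6 ). -/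
open scoped RealInnerProductSpace

/-!
Evaluate the Killing identity at `x = y = δ`: `⟪δ, δ⟫ = ∑_{α ∈ Δ} ⟪α, δ⟫²`. Writing `s = ⟪δ, δ⟫`,
the roots `±δ` contribute `s²` each, roots orthogonal to `δ` contribute nothing, and by the
Cartan condition every other root has `⟪α, δ⟫ = ±s/2` and contributes `s²/4`. Hence
`4s = s² (|Δ| − |Δ ∩ δ^⊥| + 6)`, and `s ≠ 0` since `δ ≠ 0`.
-/

theorem four_mul_sq_eq_of_two_mul_div_mem {a s : ℝ} (hs : s ≠ 0)
    (h : 2 * a / s = -1 ∨ 2 * a / s = 0 ∨ 2 * a / s = 1) :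
    4 * a ^ 2 = s ^ 2 * if a ≠ 0 then 1 else 0 := by
  rcases h with h | h | h <;> rw [div_eq_iff hs] at h
  · rw [if_pos (by rintro rfl; exact hs (by linarith))]
    linear_combination (2 * a - s) * h
  · rw [if_neg (by simpa using h)]
    linear_combination 2 * a * h
  · rw [if_pos (by rintro rfl; exact hs (by linarith))]
    linear_combination (2 * a + s) * h

/-- The last factor is the square of the Cartan integer `2⟪α, δ⟫ / ⟪δ, δ⟫`, written as a sum of
indicators so that its sum over `Δ` is a count. -/
theorem four_mul_sq_inner_eq_of_cartan {V : Type*} [NormedAddCommGroup V] [InnerProductSpace ℝ V]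
    [DecidableEq V] {α δ : V} (hδ : δ ≠ 0)
    (hcartan : α ≠ δ → α ≠ -δ →
      2 * ⟪α, δ⟫ / ⟪δ, δ⟫ = -1 ∨ 2 * ⟪α, δ⟫ / ⟪δ, δ⟫ = 0 ∨ 2 * ⟪α, δ⟫ / ⟪δ, δ⟫ = 1) :
    4 * ⟪α, δ⟫ ^ 2 = ⟪δ, δ⟫ ^ 2 *
      ((if ⟪α, δ⟫ ≠ 0 then 1 else 0) + (if α = δ then 3 else 0) + if α = -δ then 3 else 0) := by
  have hs : ⟪δ, δ⟫ ≠ 0 := inner_self_ne_zero.2 hδ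
  have : IsAddTorsionFree V := .of_isTorsionFree ℝ V
  have hneg : δ ≠ -δ := fun h => hδ (self_eq_neg.1 h)
  by_cases hα₁ : α = δ
  · subst hα₁
    rw [if_pos hs, if_pos rfl, if_neg hneg]
    ring
  by_cases hα₂ : α = -δ
  · subst hα₂
    rw [inner_neg_left, if_pos (neg_ne_zero.2 hs), if_neg (Ne.symm hneg), if_pos rfl]
    ring
  rw [if_neg hα₁, if_neg hα₂, add_zero, add_zero]
  exact four_mul_sq_eq_of_two_mul_div_mem hs (hcartan hα₁ hα₂)

open scoped Classical in
theorem stmt15_general {V : Type*} [NormedAddCommGroup V] [InnerProductSpace ℝ V]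
    (Δ : Finset V) (h0 : (0 : V) ∉ Δ) (hsym : ∀ α : V, α ∈ Δ ↔ -α ∈ Δ)
    (hkilling : ∀ x y : V, ⟪x, y⟫ = ∑ α ∈ Δ, ⟪α, x⟫ * ⟪α, y⟫)
    (δ : V) (hδ : δ ∈ Δ)
    (hcartan : ∀ α ∈ Δ, α ≠ δ → α ≠ -δ →
      2 * ⟪α, δ⟫ / ⟪δ, δ⟫ = -1 ∨ 2 * ⟪α, δ⟫ / ⟪δ, δ⟫ = 0 ∨
        2 * ⟪α, δ⟫ / ⟪δ, δ⟫ = 1) :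
    ⟪δ, δ⟫ = 4 / ((Δ.card : ℝ) -
      ((Δ.filter fun α => ⟪α, δ⟫ = 0).card : ℝ) + 6) := by
  have hδ0 : δ ≠ 0 := fun h => h0 (h ▸ hδ)
  have hs : ⟪δ, δ⟫ ≠ 0 := inner_self_ne_zero.2 hδ0
  set D : ℝ := (Δ.card : ℝ) - ((Δ.filter fun α => ⟪α, δ⟫ = 0).card : ℝ) + 6 with hD
  have hcount : ∑ α ∈ Δ,
      ((if ⟪α, δ⟫ ≠ 0 then 1 else 0) + (if α = δ then 3 else 0) + if α = -δ then 3 else 0) = D := by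
    have hcard := Finset.card_filter_add_card_filter_not (s := Δ) (fun α => ⟪α, δ⟫ = 0)
    rw [Finset.sum_add_distrib, Finset.sum_add_distrib, Finset.sum_boole, Finset.sum_ite_eq',
      Finset.sum_ite_eq', if_pos hδ, if_pos ((hsym δ).1 hδ), hD, ← hcard]
    push_cast
    ring
  have hkey : 4 * ⟪δ, δ⟫ = ⟪δ, δ⟫ ^ 2 * D :=
    calc 4 * ⟪δ, δ⟫ = ∑ α ∈ Δ, 4 * ⟪α, δ⟫ ^ 2 := by
          simp only [← Finset.mul_sum, sq, ← hkilling]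
      _ = ⟪δ, δ⟫ ^ 2 * D := by
          rw [← hcount, Finset.mul_sum]
          exact Finset.sum_congr rfl fun α hα ↦
            four_mul_sq_inner_eq_of_cartan hδ0 (hcartan α hα)
  have h4 : ⟪δ, δ⟫ * D = 4 := mul_left_cancel₀ hs (by linear_combination -hkey)
  rw [eq_div_iff (right_ne_zero_of_mul (h4 ▸ four_ne_zero)), h4]

open scoped Classical in
/-- Lemma 3.1: if the inner product is the Killing-form inner product
(`⟨x,y⟩ = Σ_{α∈Δ} ⟨α,x⟩⟨α,y⟩`), `Δ = −Δ` consists of nonzero vectors, and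
`2⟨α,δ⟩/⟨δ,δ⟩ ∈ {−1,0,1}` for every `α ∈ Δ` other than `±δ`, then
`⟨δ,δ⟩ = 4/(|Δ| − |Δ ∩ δ^⊥| + 6)`. -/
theorem stmt15 {V : Type*} [NormedAddCommGroup V] [InnerProductSpace ℝ V]
    [FiniteDimensional ℝ V]
    (Δ : Finset V) (h0 : (0 : V) ∉ Δ) (hsym : ∀ α : V, α ∈ Δ ↔ -α ∈ Δ)
    (hkilling : ∀ x y : V, ⟪x, y⟫ = ∑ α ∈ Δ, ⟪α, x⟫ * ⟪α, y⟫)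
    (δ : V) (hδ : δ ∈ Δ)
    (hcartan : ∀ α ∈ Δ, α ≠ δ → α ≠ -δ →
      2 * ⟪α, δ⟫ / ⟪δ, δ⟫ = -1 ∨ 2 * ⟪α, δ⟫ / ⟪δ, δ⟫ = 0 ∨
        2 * ⟪α, δ⟫ / ⟪δ, δ⟫ = 1) :
    ⟪δ, δ⟫ = 4 / ((Δ.card : ℝ) -
      ((Δ.filter fun α => ⟪α, δ⟫ = 0).card : ℝ) + 6) :=
  stmt15_general Δ h0 hsym hkilling δ hδ hcartan
end

section
/- Let V be a real inner product space, let Φ ⊂ V be a finite set of nonzero vectors such that 2⟨α,β⟩/⟨β,β⟩ ∈ ℤ for all α, β ∈ Φ, let Π = {α₁,…,α_l} ⊂ Φ be linearly independent, and let Φ⁺ ⊆ Φ be a subset each of whose elements is a linear combination of α₁,…,α_l with nonnegative coefficients. Let δ ∈ Φ⁺ satisfy ⟨δ, α_i⟩ ≥ 0 for all i and ‖α‖ ≤ ‖δ‖ for all α ∈ Φ. Then for every α ∈ Φ⁺ with α ≠ δ, one has 2⟨α,δ⟩/⟨δ,δ⟩ ∈ {0, 1}. -/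
open scoped RealInnerProductSpace

/-- The key intermediate claim in the proof of Lemma 3.1: if `δ` is a dominant
root of maximal length in a root system `Φ` (with integrality of Cartan numbers)
and `α ∈ Φ⁺` is a positive root different from `δ`, then `2⟨α,δ⟩/⟨δ,δ⟩ ∈ {0,1}`. -/
theorem stmt16 {V : Type*} [NormedAddCommGroup V] [InnerProductSpace ℝ V]
    (Φ : Finset V) (h0 : (0 : V) ∉ Φ)
    (hint : ∀ α ∈ Φ, ∀ β ∈ Φ, ∃ n : ℤ, 2 * ⟪α, β⟫ / ⟪β, β⟫ = (n : ℝ))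
    (l : ℕ) (a : Fin l → V) (haΦ : ∀ i, a i ∈ Φ) (hind : LinearIndependent ℝ a)
    (Φp : Finset V) (hsub : Φp ⊆ Φ)
    (hposcomb : ∀ β ∈ Φp, ∃ c : Fin l → ℝ, (∀ i, 0 ≤ c i) ∧ β = ∑ i, c i • a i)
    (δ : V) (hδ : δ ∈ Φp) (hdom : ∀ i, 0 ≤ ⟪δ, a i⟫)
    (hlen : ∀ α ∈ Φ, ‖α‖ ≤ ‖δ‖) :
    ∀ α ∈ Φp, α ≠ δ →
      2 * ⟪α, δ⟫ / ⟪δ, δ⟫ = 0 ∨ 2 * ⟪α, δ⟫ / ⟪δ, δ⟫ = 1 := by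
  intro α hα hne
  have hαΦ : α ∈ Φ := hsub hα
  have hδΦ : δ ∈ Φ := hsub hδ
  have hδ0 : δ ≠ 0 := fun h => h0 (h ▸ hδΦ)
  have hα0 : α ≠ 0 := fun h => h0 (h ▸ hαΦ)
  have hδδ : (0:ℝ) < ⟪δ, δ⟫ := by
    rw [real_inner_self_eq_norm_mul_norm]
    have := norm_pos_iff.mpr hδ0
    positivity
  -- lower bound : ⟪α, δ⟫ ≥ 0
  obtain ⟨c, hc, hαsum⟩ := hposcomb α hα
  have hnn : 0 ≤ ⟪α, δ⟫ := by
    rw [hαsum, sum_inner]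
    apply Finset.sum_nonneg
    intro i _
    rw [real_inner_smul_left]
    exact mul_nonneg (hc i) (by rw [real_inner_comm]; exact hdom i)
  -- upper bound : ⟪α, δ⟫ ≤ ‖δ‖^2, strict unless α = δ
  have hCS : ⟪α, δ⟫ ≤ ‖α‖ * ‖δ‖ := real_inner_le_norm α δ
  have hub : ⟪α, δ⟫ ≤ ⟪δ, δ⟫ := by
    rw [real_inner_self_eq_norm_mul_norm]
    exact hCS.trans (mul_le_mul_of_nonneg_right (hlen α hαΦ) (norm_nonneg δ))
  have hstrict : ⟪α, δ⟫ < ⟪δ, δ⟫ := by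
    rcases lt_or_eq_of_le hub with h | h
    · exact h
    · exfalso
      have hδnorm : (0:ℝ) < ‖δ‖ := norm_pos_iff.mpr hδ0
      have hna : ‖α‖ = ‖δ‖ := by
        refine le_antisymm (hlen α hαΦ) ?_
        by_contra hlt
        push_neg at hlt
        have : ⟪α, δ⟫ < ‖δ‖ * ‖δ‖ :=
          hCS.trans_lt (mul_lt_mul_of_pos_right hlt hδnorm)
        rw [h, real_inner_self_eq_norm_mul_norm] at this
        exact lt_irrefl _ this
      have heq : ⟪α, δ⟫ = ‖α‖ * ‖δ‖ := by
        rw [h, real_inner_self_eq_norm_mul_norm, hna]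
      rw [inner_eq_norm_mul_iff_real] at heq
      rw [hna] at heq
      exact hne (smul_right_injective V (ne_of_gt hδnorm) heq)
  -- now the Cartan integer n satisfies 0 ≤ n < 2
  obtain ⟨n, hn⟩ := hint α hαΦ δ hδΦ
  have hn0 : (0:ℝ) ≤ (n:ℝ) := by
    rw [← hn]
    positivity
  have hn2 : (n:ℝ) < 2 := by
    rw [← hn, div_lt_iff₀ hδδ]
    linarith
  have h0n : 0 ≤ n := by exact_mod_cast hn0
  have h2n : n < 2 := by exact_mod_cast hn2
  interval_cases n
  · left; rw [hn]; norm_num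
  · right; rw [hn]; norm_num
end
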